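/- arXiv:1910.02572 — 7 statements merged into one kernel-verified Lean document; each statement's English description precedes it below -/
import Mathlib

section
/- Let m ≥ 2 be an integer and k > 0 a real number with (m−2)² + 8k ≠ 4, and set k₁ = (−(m−2)+√((m−2)²+8k))/2 and k₂ = (−(m−2)−√((m−2)²+8k))/2. A four-times-differentiable function ρ : (0,∞) → ℝ satisfies the fourth-order system F''(r) + (m−1)F'(r)/r − 2k F(r)/r² = 0 for all r > 0, where F(r) := ρ''(r) + (m−1)ρ'(r)/r − 2k ρ(r)/r², if and only if there exist constants c₁, c₂, c₃, c₄ ∈ ℝ such that ρ(r) = c₁/(2(m+2k₁)) · r^{k₁+2} + c₂/(2(m+2k₂)) · r^{k₂+2} + c₃ r^{k₁} + c₄ r^{k₂} for all r > 0. -/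
/-!
With `k₁, k₂` the roots of `p² + (m - 2) p - 2k`, the operator
`y ↦ r² (y'' + (m - 1) y'/r - 2k y/r²)` is the Cauchy–Euler operator
`E = (r d/dr - k₁) (r d/dr - k₂)`. Solving the two first-order factors with integrating factors
shows that, since `k₁ ≠ k₂`, the kernel of `E` on `(0, ∞)` is spanned by `r ^ k₁` and `r ^ k₂`;
and `E (r ^ p) = (p - k₁) (p - k₂) r ^ p` yields particular solutions. Hence `E F = 0` means
`F = c₁ r ^ k₁ + c₂ r ^ k₂`, and then `E ρ = r² F` is solved by
`c_i r ^ (k_i + 2) / (2 (k_i + 2 - k_j))` plus the kernel, where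
`2 (k_i + 2 - k_j) = 2 (m + 2 k_i)` vanishes only in the resonant case `k₂ + 2 = k₁`,
i.e. `(m - 2)² + 8k = 4`.
-/

open Set Filter Topology

namespace CauchyEuler

theorem differentiableOn_rpow_const_Ioi (p : ℝ) :
    DifferentiableOn ℝ (fun x : ℝ => x ^ p) (Ioi 0) :=
  (Real.differentiableOn_rpow_const p).mono fun _ hx => ne_of_gt hx

theorem exists_eq_mul_rpow_of_mul_deriv_eq {g : ℝ → ℝ} {c : ℝ}
    (hg : DifferentiableOn ℝ g (Ioi 0)) (h : ∀ r, 0 < r → r * deriv g r = c * g r) :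
    ∃ C : ℝ, ∀ r, 0 < r → g r = C * r ^ c := by
  have hrpow := differentiableOn_rpow_const_Ioi (-c)
  obtain ⟨C, hC⟩ := isOpen_Ioi.exists_is_const_of_deriv_eq_zero isPreconnected_Ioi
    (hg.fun_mul hrpow) fun r (hr : 0 < r) => by
      rw [Pi.zero_apply, deriv_fun_mul (hg.differentiableAt (Ioi_mem_nhds hr))
        (hrpow.differentiableAt (Ioi_mem_nhds hr)), Real.deriv_rpow_const,
        Real.rpow_sub_one hr.ne']
      field_simp
      linear_combination r ^ (-c) * h r hr
  refine ⟨C, fun r hr => ?_⟩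
  rw [← hC r hr, mul_assoc, ← Real.rpow_add hr, neg_add_cancel, Real.rpow_zero, mul_one]

/-- The Cauchy–Euler operator with indicial polynomial `(p - a) * (p - b)`. -/
noncomputable def cauchyEulerOp (a b : ℝ) (y : ℝ → ℝ) (r : ℝ) : ℝ :=
  r ^ 2 * deriv (deriv y) r + (1 - a - b) * r * deriv y r + a * b * y r

variable {a b : ℝ} {y : ℝ → ℝ}

theorem cauchyEulerOp_eq_mul_deriv_sub {r : ℝ} (hy : ContDiffOn ℝ 2 y (Ioi 0)) (hr : 0 < r) :
    cauchyEulerOp a b y r =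
      r * deriv (fun x => x * deriv y x - b * y x) r - a * (r * deriv y r - b * y r) := by
  have hy₁ := (hy.differentiableOn two_ne_zero).differentiableAt (Ioi_mem_nhds hr)
  have hy₂ := ((hy.deriv_of_isOpen isOpen_Ioi le_rfl).differentiableOn
    one_ne_zero).differentiableAt (Ioi_mem_nhds hr)
  rw [deriv_fun_sub (differentiableAt_fun_id.fun_mul hy₂) (hy₁.const_mul b),
    deriv_fun_mul differentiableAt_fun_id hy₂, deriv_const_mul _ hy₁, deriv_id'', cauchyEulerOp]
  ring

theorem exists_eq_of_cauchyEulerOp_eq_zero (hab : a ≠ b) (hy : ContDiffOn ℝ 2 y (Ioi 0))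
    (h : ∀ r, 0 < r → cauchyEulerOp a b y r = 0) :
    ∃ c₁ c₂ : ℝ, ∀ r, 0 < r → y r = c₁ * r ^ a + c₂ * r ^ b := by
  have hy₁ := hy.differentiableOn two_ne_zero
  have hy₂ := (hy.deriv_of_isOpen isOpen_Ioi le_rfl).differentiableOn one_ne_zero
  obtain ⟨C, hC⟩ := exists_eq_mul_rpow_of_mul_deriv_eq (c := a)
    (g := fun x => x * deriv y x - b * y x)
    (differentiableOn_id.fun_mul hy₂ |>.fun_sub (hy₁.const_mul b)) fun r hr => by
      linear_combination (cauchyEulerOp_eq_mul_deriv_sub hy hr).symm.trans (h r hr)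
  have hrpow := differentiableOn_rpow_const_Ioi a
  obtain ⟨D, hD⟩ := exists_eq_mul_rpow_of_mul_deriv_eq (c := b)
    (g := fun x => y x - C / (a - b) * x ^ a) (hy₁.fun_sub (hrpow.const_mul _)) fun r hr => by
      rw [deriv_fun_sub (hy₁.differentiableAt (Ioi_mem_nhds hr))
        ((hrpow.differentiableAt (Ioi_mem_nhds hr)).const_mul _), deriv_const_mul_field,
        Real.deriv_rpow_const, Real.rpow_sub_one hr.ne']
      field_simp [sub_ne_zero.mpr hab]
      linear_combination (a - b) * hC r hr
  exact ⟨C / (a - b), D, fun r hr => by linear_combination hD r hr⟩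

theorem cauchyEulerOp_div_sq {M K : ℝ} (hsum : a + b = 2 - M) (hprod : a * b = -K)
    (y : ℝ → ℝ) {r : ℝ} (hr : r ≠ 0) :
    cauchyEulerOp a b y r / r ^ 2 =
      deriv (deriv y) r + (M - 1) * deriv y r / r - K * y r / r ^ 2 := by
  rw [cauchyEulerOp, hprod, show 1 - a - b = M - 1 by linarith]
  field_simp
  ring

theorem contDiffOn_cauchyEulerOp {n : WithTop ℕ∞} (hy : ContDiffOn ℝ (n + 2) y (Ioi 0)) :
    ContDiffOn ℝ n (cauchyEulerOp a b y) (Ioi 0) := by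
  have hy₁ := hy.deriv_of_isOpen (m := n + 1) isOpen_Ioi (by rw [add_assoc]; norm_num)
  have hy₂ := hy₁.deriv_of_isOpen isOpen_Ioi le_rfl
  exact ((contDiffOn_id.pow 2).mul hy₂).add
    (((contDiffOn_const.mul contDiffOn_id).mul (hy₁.of_le le_self_add))) |>.add
    (contDiffOn_const.mul (hy.of_le le_self_add))

theorem cauchyEulerOp_congr {Y : ℝ → ℝ} (h : ∀ x, 0 < x → y x = Y x) {r : ℝ} (hr : 0 < r) :
    cauchyEulerOp a b y r = cauchyEulerOp a b Y r := by
  have hev : y =ᶠ[𝓝 r] Y := eventuallyEq_of_mem (Ioi_mem_nhds hr) h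
  rw [cauchyEulerOp, cauchyEulerOp, hev.deriv.deriv_eq, hev.deriv_eq, h r hr]

theorem cauchyEulerOp_sub {Y : ℝ → ℝ} (hy : ContDiffOn ℝ 2 y (Ioi 0))
    (hY : ContDiffOn ℝ 2 Y (Ioi 0)) {r : ℝ} (hr : 0 < r) :
    cauchyEulerOp a b (fun x => y x - Y x) r = cauchyEulerOp a b y r - cauchyEulerOp a b Y r := by
  have hd₁ {f : ℝ → ℝ} (hf : ContDiffOn ℝ 2 f (Ioi 0)) {x : ℝ} (hx : 0 < x) :
      DifferentiableAt ℝ f x :=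
    (hf.differentiableOn two_ne_zero).differentiableAt (Ioi_mem_nhds hx)
  have hd₂ {f : ℝ → ℝ} (hf : ContDiffOn ℝ 2 f (Ioi 0)) :
      DifferentiableAt ℝ (deriv f) r :=
    ((hf.deriv_of_isOpen isOpen_Ioi le_rfl).differentiableOn one_ne_zero).differentiableAt
      (Ioi_mem_nhds hr)
  have hev : deriv (fun x => y x - Y x) =ᶠ[𝓝 r] fun x => deriv y x - deriv Y x :=
    eventuallyEq_of_mem (Ioi_mem_nhds hr) fun x hx => deriv_fun_sub (hd₁ hy hx) (hd₁ hY hx)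
  rw [cauchyEulerOp, cauchyEulerOp, cauchyEulerOp, hev.deriv_eq, hev.eq_of_nhds,
    deriv_fun_sub (hd₂ hy) (hd₂ hY)]
  ring

variable {ι : Type*}

theorem hasDerivAt_sum_rpow (s : Finset ι) (c p : ι → ℝ) {r : ℝ} (hr : 0 < r) :
    HasDerivAt (fun x => ∑ i ∈ s, c i * x ^ p i) (∑ i ∈ s, c i * p i * r ^ (p i - 1)) r :=
  HasDerivAt.fun_sum fun i _ => by
    simpa only [mul_assoc] using
      (Real.hasDerivAt_rpow_const (p := p i) (Or.inl hr.ne')).const_mul (c i)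

theorem cauchyEulerOp_sum_rpow (s : Finset ι) (c p : ι → ℝ) {r : ℝ} (hr : 0 < r) :
    cauchyEulerOp a b (fun x => ∑ i ∈ s, c i * x ^ p i) r =
      ∑ i ∈ s, c i * ((p i - a) * (p i - b)) * r ^ p i := by
  have hev : deriv (fun x => ∑ i ∈ s, c i * x ^ p i) =ᶠ[𝓝 r]
      fun x => ∑ i ∈ s, c i * p i * x ^ (p i - 1) :=
    eventuallyEq_of_mem (Ioi_mem_nhds hr) fun x hx => (hasDerivAt_sum_rpow s c p hx).deriv
  rw [cauchyEulerOp, hev.deriv_eq, hev.eq_of_nhds,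
    (hasDerivAt_sum_rpow s (fun i => c i * p i) (fun i => p i - 1) hr).deriv,
    Finset.mul_sum, Finset.mul_sum, Finset.mul_sum, ← Finset.sum_add_distrib,
    ← Finset.sum_add_distrib]
  refine Finset.sum_congr rfl fun i _ => ?_
  rw [Real.rpow_sub_one hr.ne', Real.rpow_sub_one hr.ne']
  field_simp
  ring

theorem exists_eq_sum_rpow_of_cauchyEulerOp_eq (hab : a ≠ b) (hy : ContDiffOn ℝ 2 y (Ioi 0))
    (s : Finset ι) (d p : ι → ℝ) (hp : ∀ i ∈ s, (p i - a) * (p i - b) ≠ 0)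
    (h : ∀ r, 0 < r → cauchyEulerOp a b y r = ∑ i ∈ s, d i * r ^ p i) :
    ∃ c₁ c₂ : ℝ, ∀ r, 0 < r →
      y r = ∑ i ∈ s, d i / ((p i - a) * (p i - b)) * r ^ p i + c₁ * r ^ a + c₂ * r ^ b := by
  have hY : ContDiffOn ℝ 2 (fun x => ∑ i ∈ s, d i / ((p i - a) * (p i - b)) * x ^ p i)
      (Ioi 0) :=
    ContDiffOn.sum fun i _ => contDiffOn_const.mul fun x hx =>
      (Real.contDiffAt_rpow_const_of_ne (ne_of_gt hx)).contDiffWithinAt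
  obtain ⟨c₁, c₂, hc⟩ := exists_eq_of_cauchyEulerOp_eq_zero hab (hy.sub hY) fun r hr => by
    rw [cauchyEulerOp_sub hy hY hr, h r hr, cauchyEulerOp_sum_rpow s _ p hr, sub_eq_zero]
    exact Finset.sum_congr rfl fun i hi => by rw [div_mul_cancel₀ _ (hp i hi)]
  exact ⟨c₁, c₂, fun r hr => by linear_combination hc r hr⟩

theorem exists_eq_of_cauchyEulerOp_cauchyEulerOp_eq_zero {F : ℝ → ℝ} (hab : a ≠ b)
    (h₁ : a + 2 ≠ b) (h₂ : b + 2 ≠ a) (hy : ContDiffOn ℝ 4 y (Ioi 0))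
    (hF : ∀ r, 0 < r → F r = cauchyEulerOp a b y r / r ^ 2)
    (h : ∀ r, 0 < r → cauchyEulerOp a b F r = 0) :
    ∃ c₁ c₂ c₃ c₄ : ℝ, ∀ r, 0 < r →
      y r = c₁ / (2 * (a + 2 - b)) * r ^ (a + 2) + c₂ / (2 * (b + 2 - a)) * r ^ (b + 2)
        + c₃ * r ^ a + c₄ * r ^ b := by
  have hF₂ : ContDiffOn ℝ 2 F (Ioi 0) :=
    ((contDiffOn_cauchyEulerOp (n := 2) hy).div (contDiffOn_id.pow 2)
      fun x hx => pow_ne_zero 2 (ne_of_gt hx)).congr fun x hx => hF x hx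
  obtain ⟨A, B, hAB⟩ := exists_eq_of_cauchyEulerOp_eq_zero hab hF₂ h
  obtain ⟨c₃, c₄, hy'⟩ := exists_eq_sum_rpow_of_cauchyEulerOp_eq hab
    (hy.of_le (by norm_num)) Finset.univ ![A, B] ![a + 2, b + 2]
    (by simp [Fin.forall_fin_two, sub_ne_zero.mpr h₁, sub_ne_zero.mpr h₂])
    fun r hr => by
      have := hF r hr
      rw [hAB r hr] at this
      simp only [Fin.sum_univ_two, Matrix.cons_val_zero, Matrix.cons_val_one, Real.rpow_add hr,
        Real.rpow_ofNat]
      field_simp at this ⊢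
      linarith
  refine ⟨A, B, c₃, c₄, fun r hr => ?_⟩
  rw [hy' r hr]
  simp only [Fin.sum_univ_two, Matrix.cons_val_zero, Matrix.cons_val_one]
  ring

theorem cauchyEulerOp_cauchyEulerOp_eq_zero_of_eq {F : ℝ → ℝ} (h₁ : a + 2 ≠ b) (h₂ : b + 2 ≠ a)
    (hF : ∀ r, 0 < r → F r = cauchyEulerOp a b y r / r ^ 2) {c₁ c₂ c₃ c₄ : ℝ}
    (hy : ∀ r, 0 < r → y r = c₁ / (2 * (a + 2 - b)) * r ^ (a + 2)
      + c₂ / (2 * (b + 2 - a)) * r ^ (b + 2) + c₃ * r ^ a + c₄ * r ^ b) :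
    ∀ r, 0 < r → cauchyEulerOp a b F r = 0 := by
  have hF' : ∀ r, 0 < r → F r = ∑ i, ![c₁, c₂] i * r ^ ![a, b] i := fun r hr => by
    rw [hF r hr, cauchyEulerOp_congr (Y := fun x => ∑ i, ![c₁ / (2 * (a + 2 - b)),
      c₂ / (2 * (b + 2 - a)), c₃, c₄] i * x ^ ![a + 2, b + 2, a, b] i)
      (fun x hx => by simp [Fin.sum_univ_four, hy x hx]) hr, cauchyEulerOp_sum_rpow _ _ _ hr]
    simp only [Fin.sum_univ_four, Fin.sum_univ_two, Matrix.cons_val_zero, Matrix.cons_val_one,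
      Matrix.cons_val, add_sub_cancel_left, sub_self, zero_mul, mul_zero, add_zero,
      Real.rpow_add hr, Real.rpow_ofNat]
    field_simp [sub_ne_zero.mpr h₁, sub_ne_zero.mpr h₂]
  intro r hr
  rw [cauchyEulerOp_congr hF' hr, cauchyEulerOp_sum_rpow _ _ _ hr]
  simp [Fin.sum_univ_two]

theorem indicial_roots_vieta {M k k₁ k₂ : ℝ} (hk : 0 < k) (hres : (M - 2) ^ 2 + 8 * k ≠ 4)
    (hk₁ : k₁ = (-(M - 2) + √((M - 2) ^ 2 + 8 * k)) / 2)
    (hk₂ : k₂ = (-(M - 2) - √((M - 2) ^ 2 + 8 * k)) / 2) :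
    k₁ + k₂ = 2 - M ∧ k₁ * k₂ = -(2 * k) ∧ k₁ ≠ k₂ ∧ k₁ + 2 ≠ k₂ ∧ k₂ + 2 ≠ k₁ := by
  have hdisc : 0 < (M - 2) ^ 2 + 8 * k := by positivity
  have hsq := Real.sq_sqrt hdisc.le
  have hdiff : k₁ - k₂ = √((M - 2) ^ 2 + 8 * k) := by rw [hk₁, hk₂]; ring
  have hpos := Real.sqrt_pos.mpr hdisc
  refine ⟨by rw [hk₁, hk₂]; ring, by rw [hk₁, hk₂]; linear_combination -hsq / 4,
    by linarith, by linarith, fun h => hres ?_⟩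
  rw [← hsq, ← hdiff, show k₁ - k₂ = 2 by linarith]
  norm_num

end CauchyEuler

open CauchyEuler

theorem stmt_1_general (m : ℕ) (k : ℝ) (hk : 0 < k)
    (hres : ((m : ℝ) - 2) ^ 2 + 8 * k ≠ 4)
    (k₁ k₂ : ℝ)
    (hk₁ : k₁ = (-((m : ℝ) - 2) + Real.sqrt (((m : ℝ) - 2) ^ 2 + 8 * k)) / 2)
    (hk₂ : k₂ = (-((m : ℝ) - 2) - Real.sqrt (((m : ℝ) - 2) ^ 2 + 8 * k)) / 2)
    (ρ : ℝ → ℝ)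
    (hρ : ∀ r : ℝ, 0 < r → ContDiffAt ℝ 4 ρ r)
    (F : ℝ → ℝ)
    (hF : ∀ r : ℝ, 0 < r →
      F r = deriv (deriv ρ) r + ((m : ℝ) - 1) * deriv ρ r / r - 2 * k * ρ r / r ^ 2) :
    (∀ r : ℝ, 0 < r →
        deriv (deriv F) r + ((m : ℝ) - 1) * deriv F r / r - 2 * k * F r / r ^ 2 = 0) ↔
    (∃ c₁ c₂ c₃ c₄ : ℝ, ∀ r : ℝ, 0 < r →
        ρ r = c₁ / (2 * ((m : ℝ) + 2 * k₁)) * r ^ (k₁ + 2)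
          + c₂ / (2 * ((m : ℝ) + 2 * k₂)) * r ^ (k₂ + 2)
          + c₃ * r ^ k₁ + c₄ * r ^ k₂) := by
  obtain ⟨hsum, hprod, hne, hres₁, hres₂⟩ := indicial_roots_vieta hk hres hk₁ hk₂
  have hFρ : ∀ r, 0 < r → F r = cauchyEulerOp k₁ k₂ ρ r / r ^ 2 := fun r hr => by
    rw [hF r hr, cauchyEulerOp_div_sq hsum hprod ρ hr.ne']
  rw [show (m : ℝ) + 2 * k₁ = k₁ + 2 - k₂ by linarith,
    show (m : ℝ) + 2 * k₂ = k₂ + 2 - k₁ by linarith,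
    forall₂_congr fun r (hr : 0 < r) => by
      rw [← cauchyEulerOp_div_sq hsum hprod F hr.ne', div_eq_zero_iff, or_iff_left (by positivity)]]
  exact ⟨exists_eq_of_cauchyEulerOp_cauchyEulerOp_eq_zero hne hres₁ hres₂
      (fun r hr => (hρ r hr).contDiffWithinAt) hFρ,
    fun ⟨_, _, _, _, hρ'⟩ => cauchyEulerOp_cauchyEulerOp_eq_zero_of_eq hres₁ hres₂ hFρ hρ'⟩

theorem stmt_1 (m : ℕ) (hm : 2 ≤ m) (k : ℝ) (hk : 0 < k)
    (hres : ((m : ℝ) - 2) ^ 2 + 8 * k ≠ 4)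
    (k₁ k₂ : ℝ)
    (hk₁ : k₁ = (-((m : ℝ) - 2) + Real.sqrt (((m : ℝ) - 2) ^ 2 + 8 * k)) / 2)
    (hk₂ : k₂ = (-((m : ℝ) - 2) - Real.sqrt (((m : ℝ) - 2) ^ 2 + 8 * k)) / 2)
    (ρ : ℝ → ℝ)
    (hρ : ∀ r : ℝ, 0 < r → ContDiffAt ℝ 4 ρ r)
    (F : ℝ → ℝ)
    (hF : ∀ r : ℝ, 0 < r →
      F r = deriv (deriv ρ) r + ((m : ℝ) - 1) * deriv ρ r / r - 2 * k * ρ r / r ^ 2) :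
    (∀ r : ℝ, 0 < r →
        deriv (deriv F) r + ((m : ℝ) - 1) * deriv F r / r - 2 * k * F r / r ^ 2 = 0) ↔
    (∃ c₁ c₂ c₃ c₄ : ℝ, ∀ r : ℝ, 0 < r →
        ρ r = c₁ / (2 * ((m : ℝ) + 2 * k₁)) * r ^ (k₁ + 2)
          + c₂ / (2 * ((m : ℝ) + 2 * k₂)) * r ^ (k₂ + 2)
          + c₃ * r ^ k₁ + c₄ * r ^ k₂) :=
  stmt_1_general m k hk hres k₁ k₂ hk₁ hk₂ ρ hρ F hF
end

section
/- Let m > 2 be an integer and k > 0 a real number with (m−2)² + 8k > 4. If a four-times-differentiable function ρ : (0,∞) → ℝ satisfies the fourth-order system F''(r) + (m−1)F'(r)/r − 2k F(r)/r² = 0 on (0,∞), where F(r) := ρ''(r) + (m−1)ρ'(r)/r − 2k ρ(r)/r², then there exist functions ρ₁, ρ₂ : (0,∞) → ℝ, each satisfying the harmonic-map ODE ρᵢ''(r) + (m−1)ρᵢ'(r)/r − 2k ρᵢ(r)/r² = 0, such that ρ(r) = r²·ρ₁(r) + ρ₂(r) for all r > 0. -/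
/-!
Write `D = r d/dr` and `L` for the radial operator. Then `r² L = D² + (m - 2) D - 2k` commutes
with `D`, in the form `L (r F') = 2 L F + r (L F)'`; so `L F = 0` gives
`L ((a + b D) F) = 0`. On the other hand `L (r² g) = r² L g + 4 D g + 2 m g`, so `r² ρ₁` solves
`L u = F` once `4 D ρ₁ + 2 m ρ₁ = F`. For `ρ₁ = (a + b D) F` this is linear in `(a, b)` after
substituting `D² F = 2k F - (m - 2) D F`, with solution `a = (m - 4) / (2C)`, `b = 1 / C`, where
`C = m² - 4m + 8k = (m - 2)² + 8k - 4 > 0`. Then `ρ₂ = ρ - r² ρ₁` has `L ρ₂ = F - F = 0`.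
Solutions of `L F = 0` are smooth, which supplies the regularity of `ρ₁`.
-/

open Set Filter Topology
open scoped ContDiff

section

variable {𝕜 : Type*} [NontriviallyNormedField 𝕜] {E : Type*} [NormedAddCommGroup E]
  [NormedSpace 𝕜 E] {f : 𝕜 → E} {x : 𝕜} {n : WithTop ℕ∞}

theorem ContDiffAt.contDiffAt_deriv (hf : ContDiffAt 𝕜 (n + 1) f x) : ContDiffAt 𝕜 n (deriv f) x :=
  (hf.fderiv_right le_rfl).clm_apply contDiffAt_const

theorem ContDiffAt.eventually_hasDerivAt (hf : ContDiffAt 𝕜 n f x) (hn : 1 ≤ n) :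
    ∀ᶠ y in 𝓝 x, HasDerivAt f (deriv f y) y :=
  ((hf.of_le hn).eventually (by simp)).mono fun _ hy => (hy.differentiableAt one_ne_zero).hasDerivAt

theorem ContDiffAt.hasDerivAt_deriv (hf : ContDiffAt 𝕜 n f x) (hn : 2 ≤ n) :
    HasDerivAt (deriv f) (deriv (deriv f) x) x :=
  ((hf.of_le hn : ContDiffAt 𝕜 (1 + 1) f x).contDiffAt_deriv.differentiableAt
    one_ne_zero).hasDerivAt

end

/-- `radialLaplacian m k ρ = 0` is the ODE of the equivariant harmonic maps `ℝᵐ ∖ {0} → ℝⁿ ∖ {0}`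
`x ↦ ρ(|x|) φ(x/|x|)` built on an eigenmap `φ` with eigenvalue `2k`. -/
noncomputable def radialLaplacian (m k : ℝ) (f : ℝ → ℝ) (r : ℝ) : ℝ :=
  deriv (deriv f) r + (m - 1) * deriv f r / r - 2 * k * f r / r ^ 2

section

variable {m k : ℝ} {f g : ℝ → ℝ} {r : ℝ}

theorem radialLaplacian_eq_of_hasDerivAt {f' : ℝ → ℝ} {f'' : ℝ}
    (hf : ∀ᶠ s in 𝓝 r, HasDerivAt f (f' s) s) (hf' : HasDerivAt f' f'' r) :
    radialLaplacian m k f r = f'' + (m - 1) * f' r / r - 2 * k * f r / r ^ 2 := by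
  have hderiv : deriv f =ᶠ[𝓝 r] f' := hf.mono fun _ hs => hs.deriv
  rw [radialLaplacian, hderiv.deriv_eq, hf'.deriv, hderiv.eq_of_nhds]

theorem radialLaplacian_add (hf : ContDiffAt ℝ 2 f r) (hg : ContDiffAt ℝ 2 g r) :
    radialLaplacian m k (fun s => f s + g s) r =
      radialLaplacian m k f r + radialLaplacian m k g r := by
  rw [radialLaplacian_eq_of_hasDerivAt (((hf.eventually_hasDerivAt one_le_two).and
      (hg.eventually_hasDerivAt one_le_two)).mono fun _ hs => hs.1.fun_add hs.2)
    ((hf.hasDerivAt_deriv le_rfl).fun_add (hg.hasDerivAt_deriv le_rfl)),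
    radialLaplacian, radialLaplacian]
  ring

theorem radialLaplacian_sub (hf : ContDiffAt ℝ 2 f r) (hg : ContDiffAt ℝ 2 g r) :
    radialLaplacian m k (fun s => f s - g s) r =
      radialLaplacian m k f r - radialLaplacian m k g r := by
  rw [radialLaplacian_eq_of_hasDerivAt (((hf.eventually_hasDerivAt one_le_two).and
      (hg.eventually_hasDerivAt one_le_two)).mono fun _ hs => hs.1.fun_sub hs.2)
    ((hf.hasDerivAt_deriv le_rfl).fun_sub (hg.hasDerivAt_deriv le_rfl)),
    radialLaplacian, radialLaplacian]
  ring

theorem radialLaplacian_const_mul (c : ℝ) :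
    radialLaplacian m k (fun s => c * f s) r = c * radialLaplacian m k f r := by
  simp only [radialLaplacian, deriv_const_mul_field']
  ring

theorem radialLaplacian_sq_mul (hg : ContDiffAt ℝ 2 g r) (hr : r ≠ 0) :
    radialLaplacian m k (fun s => s ^ 2 * g s) r =
      r ^ 2 * radialLaplacian m k g r + 4 * r * deriv g r + 2 * m * g r := by
  have hderiv : ∀ s, HasDerivAt g (deriv g s) s →
      HasDerivAt (fun s => s ^ 2 * g s) (2 * s * g s + s ^ 2 * deriv g s) s := fun s hs =>
    ((hasDerivAt_pow 2 s).fun_mul hs).congr_deriv (by ring)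
  have hg' := (hg.eventually_hasDerivAt one_le_two).self_of_nhds
  rw [radialLaplacian_eq_of_hasDerivAt ((hg.eventually_hasDerivAt one_le_two).mono hderiv)
    ((((hasDerivAt_id' (x := r)).const_mul 2).fun_mul hg').fun_add
      ((hasDerivAt_pow 2 r).fun_mul (hg.hasDerivAt_deriv le_rfl))), radialLaplacian]
  field_simp
  ring

theorem radialLaplacian_mul_deriv (hf : ContDiffAt ℝ 3 f r) (hr : r ≠ 0) :
    radialLaplacian m k (fun s => s * deriv f s) r =
      2 * radialLaplacian m k f r + r * deriv (radialLaplacian m k f) r := by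
  have hf' : ContDiffAt ℝ 2 (deriv f) r := hf.contDiffAt_deriv
  have hf₁ := (hf.eventually_hasDerivAt (by norm_num)).self_of_nhds
  have hf₂ := hf.hasDerivAt_deriv (by norm_num)
  have hf₃ := hf'.hasDerivAt_deriv le_rfl
  have hLf : HasDerivAt (radialLaplacian m k f)
      (deriv (deriv (deriv f)) r
        + ((m - 1) * deriv (deriv f) r * r - (m - 1) * deriv f r * 1) / r ^ 2
        - (2 * k * deriv f r * r ^ 2 - 2 * k * f r * (2 * r)) / (r ^ 2) ^ 2) r :=
    (hf₃.add ((hf₂.const_mul (m - 1)).div (hasDerivAt_id r) hr)).sub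
      ((hf₁.const_mul (2 * k)).div ((hasDerivAt_pow 2 r).congr_deriv (by ring)) (pow_ne_zero 2 hr))
  rw [radialLaplacian_eq_of_hasDerivAt ((hf'.eventually_hasDerivAt one_le_two).mono fun s hs =>
      ((hasDerivAt_id' (x := s)).fun_mul hs).congr_deriv (by rw [one_mul]))
    (hf₂.fun_add ((hasDerivAt_id' (x := r)).fun_mul hf₃)), hLf.deriv, radialLaplacian]
  field_simp
  ring

theorem ContDiffAt.radialLaplacian {n : ℕ} (hf : ContDiffAt ℝ (n + 2) f r) (hr : r ≠ 0) :
    ContDiffAt ℝ n (radialLaplacian m k f) r := by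
  have hf' : ContDiffAt ℝ (n + 1) (deriv f) r := hf.contDiffAt_deriv
  exact (hf'.contDiffAt_deriv.add ((contDiffAt_const.mul (hf'.of_le le_self_add)).div
    contDiffAt_fun_id hr)).sub ((contDiffAt_const.mul (hf.of_le le_self_add)).div
    (contDiffAt_fun_id.pow 2) (pow_ne_zero 2 hr))

theorem contDiffOn_infty_of_radialLaplacian_eq_zero (hf : ContDiffOn ℝ 2 f (Ioi 0))
    (hLf : ∀ r, 0 < r → radialLaplacian m k f r = 0) : ContDiffOn ℝ ∞ f (Ioi 0) := by
  have step (n : ℕ) (hn : ContDiffOn ℝ (n + 2 : ℕ) f (Ioi 0)) :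
      ContDiffOn ℝ (n + 3 : ℕ) f (Ioi 0) := by
    have hn' : ContDiffOn ℝ (n + 1 : ℕ) (deriv f) (Ioi 0) :=
      hn.deriv_of_isOpen isOpen_Ioi (by norm_cast)
    have hexpr : ContDiffOn ℝ (n + 1 : ℕ)
        (fun s => 2 * k * f s / s ^ 2 - (m - 1) * deriv f s / s) (Ioi 0) :=
      ((contDiffOn_const.mul (hn.of_le (by norm_cast; omega))).div (contDiffOn_fun_id.pow 2)
        fun s hs => pow_ne_zero 2 (ne_of_gt hs)).sub
        ((contDiffOn_const.mul hn').div contDiffOn_fun_id fun s hs => ne_of_gt hs)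
    have hn'' : ContDiffOn ℝ (n + 1 : ℕ) (deriv (deriv f)) (Ioi 0) := hexpr.congr fun s hs => by
      have := hLf s hs
      rw [radialLaplacian] at this
      linarith
    rw [show ((n + 3 : ℕ) : WithTop ℕ∞) = (n + 1 : ℕ) + 1 + 1 by norm_cast,
      contDiffOn_succ_iff_deriv_of_isOpen isOpen_Ioi,
      contDiffOn_succ_iff_deriv_of_isOpen isOpen_Ioi]
    exact ⟨hn.differentiableOn (by norm_cast), by simp,
      hn'.differentiableOn (by norm_cast), by simp, hn''⟩
  have hsmooth (n : ℕ) : ContDiffOn ℝ (n + 2 : ℕ) f (Ioi 0) := by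
    induction n with
    | zero => exact hf
    | succ n ih => exact step n ih
  exact contDiffOn_infty.2 fun n => (hsmooth n).of_le (by norm_cast; omega)

end

noncomputable def almansiFactor (m k : ℝ) (F : ℝ → ℝ) (r : ℝ) : ℝ :=
  (m ^ 2 - 4 * m + 8 * k)⁻¹ * ((m - 4) / 2 * F r + r * deriv F r)

section

variable {m k : ℝ} {F : ℝ → ℝ} {r : ℝ}

theorem ContDiffAt.almansiFactor {n : ℕ} (hF : ContDiffAt ℝ (n + 1) F r) :
    ContDiffAt ℝ n (almansiFactor m k F) r :=
  contDiffAt_const.mul ((contDiffAt_const.mul (hF.of_le (by norm_cast; omega))).add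
    (contDiffAt_fun_id.mul hF.contDiffAt_deriv))

theorem radialLaplacian_almansiFactor (hF : ContDiffAt ℝ 3 F r) (hr : r ≠ 0)
    (hLF : radialLaplacian m k F =ᶠ[𝓝 r] 0) : radialLaplacian m k (almansiFactor m k F) r = 0 := by
  have hF₂ : ContDiffAt ℝ 2 F r := hF.of_le (by norm_num)
  unfold almansiFactor
  rw [radialLaplacian_const_mul, radialLaplacian_add (contDiffAt_const.mul hF₂)
      (contDiffAt_fun_id.mul hF.contDiffAt_deriv), radialLaplacian_const_mul,
    radialLaplacian_mul_deriv hF hr, hLF.eq_of_nhds, hLF.deriv_eq]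
  simp

theorem radialLaplacian_sq_mul_almansiFactor (hC : m ^ 2 - 4 * m + 8 * k ≠ 0)
    (hF : ContDiffAt ℝ 3 F r) (hr : r ≠ 0) (hLF : radialLaplacian m k F =ᶠ[𝓝 r] 0) :
    radialLaplacian m k (fun s => s ^ 2 * almansiFactor m k F s) r = F r := by
  have hF₁ := (hF.eventually_hasDerivAt (by norm_num)).self_of_nhds
  have hF₂ := hF.hasDerivAt_deriv (by norm_num)
  have hderiv : HasDerivAt (almansiFactor m k F) ((m ^ 2 - 4 * m + 8 * k)⁻¹ *
      ((m - 4) / 2 * deriv F r + (1 * deriv F r + r * deriv (deriv F) r))) r :=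
    ((hF₁.const_mul _).fun_add ((hasDerivAt_id' (x := r)).fun_mul hF₂)).const_mul _
  have hF'' : deriv (deriv F) r = 2 * k * F r / r ^ 2 - (m - 1) * deriv F r / r := by
    have := hLF.eq_of_nhds
    rw [radialLaplacian, Pi.zero_apply] at this
    linarith
  rw [radialLaplacian_sq_mul ((hF.almansiFactor : ContDiffAt ℝ 2 _ r)) hr,
    radialLaplacian_almansiFactor hF hr hLF, hderiv.deriv, hF'', almansiFactor]
  field_simp
  linear_combination (2 * F r) * inv_mul_cancel₀ hC

end

theorem stmt_3_general (m : ℕ) (k : ℝ)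
    (hres : 4 < ((m : ℝ) - 2) ^ 2 + 8 * k)
    (ρ : ℝ → ℝ)
    (hρ : ∀ r : ℝ, 0 < r → ContDiffAt ℝ 4 ρ r)
    (F : ℝ → ℝ)
    (hF : ∀ r : ℝ, 0 < r →
      F r = deriv (deriv ρ) r + ((m : ℝ) - 1) * deriv ρ r / r - 2 * k * ρ r / r ^ 2)
    (hbi : ∀ r : ℝ, 0 < r →
      deriv (deriv F) r + ((m : ℝ) - 1) * deriv F r / r - 2 * k * F r / r ^ 2 = 0) :
    ∃ ρ₁ ρ₂ : ℝ → ℝ,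
      (∀ r : ℝ, 0 < r → ContDiffAt ℝ 2 ρ₁ r) ∧
      (∀ r : ℝ, 0 < r → ContDiffAt ℝ 2 ρ₂ r) ∧
      (∀ r : ℝ, 0 < r →
        deriv (deriv ρ₁) r + ((m : ℝ) - 1) * deriv ρ₁ r / r - 2 * k * ρ₁ r / r ^ 2 = 0) ∧
      (∀ r : ℝ, 0 < r →
        deriv (deriv ρ₂) r + ((m : ℝ) - 1) * deriv ρ₂ r / r - 2 * k * ρ₂ r / r ^ 2 = 0) ∧
      (∀ r : ℝ, 0 < r → ρ r = r ^ 2 * ρ₁ r + ρ₂ r) := by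
  have hC : (m : ℝ) ^ 2 - 4 * m + 8 * k ≠ 0 := by nlinarith
  have hLF : ∀ r, 0 < r → radialLaplacian m k F =ᶠ[𝓝 r] 0 := fun r hr => by
    filter_upwards [Ioi_mem_nhds hr] with s hs using hbi s hs
  have hF₃ : ∀ r, 0 < r → ContDiffAt ℝ 3 F r := by
    have hF₂ : ContDiffOn ℝ 2 F (Ioi 0) := fun r hr =>
      ((hρ r hr).radialLaplacian (n := 2) hr.ne').contDiffWithinAt.congr (fun s hs => hF s hs)
        (hF r hr)
    exact fun r hr => ((contDiffOn_infty_of_radialLaplacian_eq_zero hF₂ hbi).contDiffAt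
      (Ioi_mem_nhds hr)).of_le (by norm_cast)
  have hρ₁ : ∀ r, 0 < r → ContDiffAt ℝ 2 (almansiFactor m k F) r := fun r hr =>
    (hF₃ r hr).almansiFactor (n := 2)
  have hρ' : ∀ r, 0 < r → ContDiffAt ℝ 2 ρ r := fun r hr => (hρ r hr).of_le (by norm_num)
  have hsqρ₁ : ∀ r, 0 < r → ContDiffAt ℝ 2 (fun s => s ^ 2 * almansiFactor m k F s) r :=
    fun r hr => (contDiffAt_fun_id.pow 2).mul (hρ₁ r hr)
  refine ⟨almansiFactor m k F, fun s => ρ s - s ^ 2 * almansiFactor m k F s, hρ₁,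
    fun r hr => (hρ' r hr).sub (hsqρ₁ r hr),
    fun r hr => radialLaplacian_almansiFactor (hF₃ r hr) hr.ne' (hLF r hr), fun r hr => ?_,
    fun r hr => by ring⟩
  change radialLaplacian m k (fun s => ρ s - s ^ 2 * almansiFactor m k F s) r = 0
  rw [radialLaplacian_sub (hρ' r hr) (hsqρ₁ r hr),
    radialLaplacian_sq_mul_almansiFactor hC (hF₃ r hr) hr.ne' (hLF r hr)]
  exact sub_eq_zero.2 (hF r hr).symm

theorem stmt_3 (m : ℕ) (hm : 2 < m) (k : ℝ) (hk : 0 < k)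
    (hres : 4 < ((m : ℝ) - 2) ^ 2 + 8 * k)
    (ρ : ℝ → ℝ)
    (hρ : ∀ r : ℝ, 0 < r → ContDiffAt ℝ 4 ρ r)
    (F : ℝ → ℝ)
    (hF : ∀ r : ℝ, 0 < r →
      F r = deriv (deriv ρ) r + ((m : ℝ) - 1) * deriv ρ r / r - 2 * k * ρ r / r ^ 2)
    (hbi : ∀ r : ℝ, 0 < r →
      deriv (deriv F) r + ((m : ℝ) - 1) * deriv F r / r - 2 * k * F r / r ^ 2 = 0) :
    ∃ ρ₁ ρ₂ : ℝ → ℝ,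
      (∀ r : ℝ, 0 < r → ContDiffAt ℝ 2 ρ₁ r) ∧
      (∀ r : ℝ, 0 < r → ContDiffAt ℝ 2 ρ₂ r) ∧
      (∀ r : ℝ, 0 < r →
        deriv (deriv ρ₁) r + ((m : ℝ) - 1) * deriv ρ₁ r / r - 2 * k * ρ₁ r / r ^ 2 = 0) ∧
      (∀ r : ℝ, 0 < r →
        deriv (deriv ρ₂) r + ((m : ℝ) - 1) * deriv ρ₂ r / r - 2 * k * ρ₂ r / r ^ 2 = 0) ∧
      (∀ r : ℝ, 0 < r → ρ r = r ^ 2 * ρ₁ r + ρ₂ r) :=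
  stmt_3_general m k hres ρ hρ F hF hbi
end

section
/- Let m ≥ 2 be an integer, let ρ : (0,∞) → ℝ be a smooth function, and define φ : ℝ^m∖{0} → ℝ^m by φ(x) = ρ(|x|)·x/|x|. If the map φ is biharmonic on ℝ^m∖{0} (i.e., Δ(Δφ) = 0 componentwise, where Δ is the Euclidean Laplacian) and m > 2, then there exist smooth rotationally symmetric harmonic maps φ₁, φ₂ : ℝ^m∖{0} → ℝ^m (i.e., Δφ₁ = Δφ₂ = 0, φᵢ(x) = ρᵢ(|x|)x/|x|) such that φ(x) = |x|²·φ₁(x) + φ₂(x) for all x ≠ 0. -/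
open Filter Topology


/-- The componentwise Euclidean Laplacian of a map defined on `EuclideanSpace ℝ (Fin m)`:
`Δ f (x) = ∑ᵢ ∂²f/∂xᵢ² (x)`. -/
noncomputable def lapE {m : ℕ} {F : Type*} [NormedAddCommGroup F] [NormedSpace ℝ F]
    (f : EuclideanSpace ℝ (Fin m) → F) (x : EuclideanSpace ℝ (Fin m)) : F :=
  ∑ i : Fin m,
    fderiv ℝ (fun y => fderiv ℝ f y (EuclideanSpace.single i (1 : ℝ))) x
      (EuclideanSpace.single i (1 : ℝ))

/- STATEMENT 4: Almansi property for rotationally symmetric biharmonic maps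
φ(x) = ρ(|x|)x/|x| of ℝ^m∖{0}, m > 2: φ = |x|²φ₁ + φ₂ with φ₁, φ₂ rotationally
symmetric harmonic maps. -/
lemma lapE_congr {F : Type*} [NormedAddCommGroup F] [NormedSpace ℝ F]
    {f g : EuclideanSpace ℝ (Fin m) → F} {x : EuclideanSpace ℝ (Fin m)}
    (h : f =ᶠ[𝓝 x] g) : lapE f x = lapE g x := by
  unfold lapE
  refine Finset.sum_congr rfl fun i _ => ?_
  have h1 : (fun y => fderiv ℝ f y (EuclideanSpace.single i (1:ℝ))) =ᶠ[𝓝 x]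
      (fun y => fderiv ℝ g y (EuclideanSpace.single i (1:ℝ))) :=
    (h.fderiv (𝕜 := ℝ)).mono fun y hy => by simp only [hy]
  rw [h1.fderiv_eq]

lemma hasFDerivAt_norm' {x : EuclideanSpace ℝ (Fin m)} (hx : x ≠ 0) :
    HasFDerivAt (fun y : EuclideanSpace ℝ (Fin m) => ‖y‖) (‖x‖⁻¹ • innerSL ℝ x) x := by
  have h0 : (0:ℝ) < ‖x‖ := norm_pos_iff.2 hx
  have hsq : HasFDerivAt (fun y : EuclideanSpace ℝ (Fin m) => @inner ℝ _ _ y y)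
      ((2:ℝ) • innerSL ℝ x) x := by
    have := (hasFDerivAt_id x).inner ℝ (hasFDerivAt_id x)
    refine this.congr_fderiv ?_
    ext v
    simp [real_inner_comm, two_mul, mul_comm]
  have hst : HasDerivAt Real.sqrt (1 / (2 * Real.sqrt (@inner ℝ _ _ x x)))
      (@inner ℝ _ _ x x) := Real.hasDerivAt_sqrt (by rw [real_inner_self_eq_norm_mul_norm]; exact (mul_pos h0 h0).ne')
  have := hst.comp_hasFDerivAt (f := fun y : EuclideanSpace ℝ (Fin m) => (@inner ℝ _ _ y y)) x hsq
  have hn : (fun y : EuclideanSpace ℝ (Fin m) => ‖y‖)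
      = fun y => Real.sqrt (@inner ℝ _ _ y y) := by
    funext y
    rw [real_inner_self_eq_norm_mul_norm, Real.sqrt_mul_self (norm_nonneg y)]
  rw [hn]
  refine this.congr_fderiv ?_
  ext v
  rw [real_inner_self_eq_norm_mul_norm, Real.sqrt_mul_self (norm_nonneg x)]
  simp
  field_simp

lemma hasFDerivAt_comp_norm (f : ℝ → ℝ) {a : ℝ} {x : EuclideanSpace ℝ (Fin m)} (hx : x ≠ 0)
    (hf : HasDerivAt f a ‖x‖) :
    HasFDerivAt (fun y : EuclideanSpace ℝ (Fin m) => f ‖y‖) ((a * ‖x‖⁻¹) • innerSL ℝ x) x := by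
  have := hf.comp_hasFDerivAt x (hasFDerivAt_norm' hx)
  rw [mul_smul]; exact this

lemma sum_smul_single (x : EuclideanSpace ℝ (Fin m)) :
    ∑ i : Fin m, (x i) • EuclideanSpace.single i (1:ℝ) = x := by
  ext j
  simp [Pi.single_apply]

lemma sum_sq_eq_norm_sq (x : EuclideanSpace ℝ (Fin m)) :
    ∑ i : Fin m, (x i) ^ 2 = ‖x‖ ^ 2 := by
  rw [EuclideanSpace.norm_eq, Real.sq_sqrt (by positivity)]
  simp

lemma lapE_radial (f f' : ℝ → ℝ) {a : ℝ} {x : EuclideanSpace ℝ (Fin m)} (hx : x ≠ 0)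
    (hf : ∀ r : ℝ, 0 < r → HasDerivAt f (f' r) r)
    (hf' : HasDerivAt f' a ‖x‖) :
    lapE (fun y => f ‖y‖ • y) x = (a + ((m : ℝ) + 1) * f' ‖x‖ / ‖x‖) • x := by
  have hr : (0:ℝ) < ‖x‖ := norm_pos_iff.2 hx
  set r := ‖x‖ with hrdef
  set Φ : EuclideanSpace ℝ (Fin m) → EuclideanSpace ℝ (Fin m) := fun y => f ‖y‖ • y with hΦdef
  -- first derivative at any y ≠ 0
  have hD : ∀ y : EuclideanSpace ℝ (Fin m), y ≠ 0 →
      HasFDerivAt Φ (f ‖y‖ • ContinuousLinearMap.id ℝ (EuclideanSpace ℝ (Fin m))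
        + ((f' ‖y‖ * ‖y‖⁻¹) • innerSL ℝ y).smulRight y) y := by
    intro y hy
    exact (hasFDerivAt_comp_norm f hy (hf ‖y‖ (norm_pos_iff.2 hy))).smul (hasFDerivAt_id y)
  have hopen : {y : EuclideanSpace ℝ (Fin m) | y ≠ 0} ∈ 𝓝 x :=
    isOpen_ne.mem_nhds hx
  have key : ∀ i : Fin m,
      fderiv ℝ (fun y => fderiv ℝ Φ y (EuclideanSpace.single i (1:ℝ))) x
        (EuclideanSpace.single i (1:ℝ))
      = (f' r * r⁻¹ + (a * r⁻¹ * r⁻¹ - f' r * (r^2)⁻¹ * r⁻¹) * (x i)^2) • x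
        + ((2 * (f' r * r⁻¹)) * x i) • EuclideanSpace.single i (1:ℝ) := by
    intro i
    have heq : (fun y => fderiv ℝ Φ y (EuclideanSpace.single i (1:ℝ))) =ᶠ[𝓝 x]
        (fun y => (f' ‖y‖ * ‖y‖⁻¹ * y i) • y + f ‖y‖ • EuclideanSpace.single i (1:ℝ)) := by
      filter_upwards [hopen] with y hy
      rw [(hD y hy).fderiv]
      simp only [ContinuousLinearMap.add_apply, ContinuousLinearMap.smul_apply,
        ContinuousLinearMap.smulRight_apply, ContinuousLinearMap.id_apply, innerSL_apply_apply,
        EuclideanSpace.inner_single_right, RCLike.conj_to_real, map_one, one_mul, smul_eq_mul]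
      module
    rw [heq.fderiv_eq]
    have P : HasFDerivAt (fun y : EuclideanSpace ℝ (Fin m) => f' ‖y‖)
        ((a * r⁻¹) • innerSL ℝ x) x := hasFDerivAt_comp_norm f' hx hf'
    have Q : HasFDerivAt (fun y : EuclideanSpace ℝ (Fin m) => ‖y‖⁻¹)
        ((-(r^2)⁻¹ * r⁻¹) • innerSL ℝ x) x :=
      hasFDerivAt_comp_norm (fun t => t⁻¹) hx (hasDerivAt_inv hr.ne')
    have L : HasFDerivAt (fun y : EuclideanSpace ℝ (Fin m) => y i)
        (EuclideanSpace.proj (𝕜 := ℝ) i) x := (EuclideanSpace.proj (𝕜 := ℝ) i).hasFDerivAt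
    have hA := ((P.mul Q).mul L).smul (hasFDerivAt_id x)
    have hB := (hasFDerivAt_comp_norm f hx (hf r hr)).smul_const
      (EuclideanSpace.single i (1:ℝ))
    have htot := hA.add hB
    rw [show (fun y : EuclideanSpace ℝ (Fin m) => (f' ‖y‖ * ‖y‖⁻¹ * y i) • y
        + f ‖y‖ • EuclideanSpace.single i (1:ℝ))
      = ((((fun y => f' ‖y‖) * fun y => ‖y‖⁻¹) * fun y : EuclideanSpace ℝ (Fin m) => y i) • id
        + fun y => f ‖y‖ • EuclideanSpace.single i (1:ℝ))
      from rfl, htot.fderiv]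
    simp only [ContinuousLinearMap.add_apply, ContinuousLinearMap.smul_apply,
      ContinuousLinearMap.smulRight_apply, ContinuousLinearMap.id_apply, innerSL_apply_apply,
      EuclideanSpace.inner_single_right, PiLp.proj_apply,
      EuclideanSpace.single_apply, smul_eq_mul, conj_trivial, map_one, one_mul, if_pos rfl, id_eq]
    match_scalars <;> simp <;> ring
  unfold lapE
  rw [Finset.sum_congr rfl fun i _ => key i]
  rw [Finset.sum_add_distrib]
  have h1 : ∑ i : Fin m, (f' r * r⁻¹ + (a * r⁻¹ * r⁻¹ - f' r * (r^2)⁻¹ * r⁻¹) * (x i)^2) • x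
      = ((m : ℝ) * (f' r * r⁻¹) + (a * r⁻¹ * r⁻¹ - f' r * (r^2)⁻¹ * r⁻¹) * r^2) • x := by
    rw [← Finset.sum_smul]
    congr 1
    rw [Finset.sum_add_distrib, Finset.sum_const, Finset.card_univ, Fintype.card_fin,
      nsmul_eq_mul, ← Finset.mul_sum, sum_sq_eq_norm_sq]
  have h2 : ∑ i : Fin m, ((2 * (f' r * r⁻¹)) * x i) • EuclideanSpace.single i (1:ℝ)
      = (2 * (f' r * r⁻¹)) • x := by
    have hs : ∀ i : Fin m, ((2 * (f' r * r⁻¹)) * x i) • EuclideanSpace.single i (1:ℝ)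
        = (2 * (f' r * r⁻¹)) • ((x i) • EuclideanSpace.single i (1:ℝ)) := fun i => by
      rw [smul_smul]
    rw [Finset.sum_congr rfl fun i _ => hs i, ← Finset.smul_sum, sum_smul_single]
  rw [h1, h2]
  rw [← add_smul]
  congr 1
  field_simp
  ring

lemma const_of_deriv_zero (v : ℝ → ℝ) (hv : ∀ r : ℝ, 0 < r → HasDerivAt v 0 r) :
    ∀ r : ℝ, 0 < r → v r = v 1 := by
  intro r hr
  refine (convex_Ioi (0:ℝ)).is_const_of_fderivWithin_eq_zero (𝕜 := ℝ)
    (fun t ht => ((hv t ht).differentiableAt).differentiableWithinAt) (fun t ht => ?_)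
    (Set.mem_Ioi.2 hr) (Set.mem_Ioi.2 one_pos)
  rw [fderivWithin_of_isOpen isOpen_Ioi ht, (hv t ht).hasFDerivAt.fderiv]
  ext
  simp

lemma solve_harmonic (m : ℕ) (hm : 0 < m) (g g' : ℝ → ℝ)
    (hg : ∀ r : ℝ, 0 < r → HasDerivAt g (g' r) r)
    (hg' : ∀ r : ℝ, 0 < r → HasDerivAt g' (-((m:ℝ)+1) * g' r / r) r) :
    ∃ a b : ℝ, ∀ r : ℝ, 0 < r → g r = a + b * r ^ (-(m:ℤ)) := by
  have hmR : ((m:ℝ)) ≠ 0 := Nat.cast_ne_zero.2 hm.ne'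
  set v : ℝ → ℝ := fun r => r ^ ((m:ℤ)+1) * g' r with hv
  have hvd : ∀ r : ℝ, 0 < r → HasDerivAt v 0 r := by
    intro r hr
    have h1 : HasDerivAt (fun t : ℝ => t ^ ((m:ℤ)+1)) ((((m:ℤ)+1 : ℤ) : ℝ) * r ^ ((m:ℤ)+1-1)) r :=
      hasDerivAt_zpow _ _ (Or.inl hr.ne')
    have h2 := h1.mul (hg' r hr)
    refine h2.congr_deriv ?_
    have e1 : r ^ ((m:ℤ)+1-1) = r ^ (m:ℤ) := by norm_num
    have e2 : r ^ ((m:ℤ)+1) = r ^ (m:ℤ) * r := zpow_add_one₀ hr.ne' _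
    rw [e1, e2]
    field_simp
    push_cast
    ring
  have hconst := const_of_deriv_zero v hvd
  have hg'val : ∀ r : ℝ, 0 < r → g' r = g' 1 * r ^ (-(m:ℤ)-1) := by
    intro r hr
    have h := hconst r hr
    have h1 : v 1 = g' 1 := by simp [hv]
    have hrm : (r:ℝ) ^ ((m:ℤ)+1) ≠ 0 := zpow_ne_zero _ hr.ne'
    have : g' r = g' 1 / r ^ ((m:ℤ)+1) := by
      rw [← h1, ← h]
      field_simp [hv]
      simp only [hv]; ring
    rw [this, div_eq_mul_inv, ← zpow_neg, neg_add, sub_eq_add_neg, add_comm (-(m:ℤ)) (-1:ℤ)]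
  set w : ℝ → ℝ := fun r => g r + (g' 1 / m) * r ^ (-(m:ℤ)) with hw
  have hwd : ∀ r : ℝ, 0 < r → HasDerivAt w 0 r := by
    intro r hr
    have h1 : HasDerivAt (fun t : ℝ => t ^ (-(m:ℤ))) (((-(m:ℤ) : ℤ) : ℝ) * r ^ (-(m:ℤ)-1)) r :=
      hasDerivAt_zpow _ _ (Or.inl hr.ne')
    have h2 := (hg r hr).add (h1.const_mul (g' 1 / m))
    refine h2.congr_deriv ?_
    rw [hg'val r hr]
    push_cast
    field_simp
    ring
  have hwconst := const_of_deriv_zero w hwd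
  refine ⟨g 1 + g' 1 / m, -(g' 1 / m), fun r hr => ?_⟩
  have h := hwconst r hr
  have h1 : w 1 = g 1 + g' 1 / m := by simp [hw]
  simp only [hw, one_zpow, mul_one] at h
  linarith [h]

lemma deriv_chain (g : ℝ → ℝ) (hg : ContDiffOn ℝ (⊤:ℕ∞) g (Set.Ioi 0)) :
    (∀ r : ℝ, 0 < r → HasDerivAt g (deriv g r) r) ∧
    ContDiffOn ℝ (⊤:ℕ∞) (deriv g) (Set.Ioi 0) := by
  have h := (contDiffOn_infty_iff_deriv_of_isOpen isOpen_Ioi).1 hg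
  exact ⟨fun r hr => (h.1.differentiableAt (isOpen_Ioi.mem_nhds hr)).hasDerivAt, h.2⟩

lemma ratio_eq (m : ℕ) (c d t : ℝ) (ht : t ≠ 0) :
    (c * t + d * (t / t ^ m)) / t = c + d * t ^ (-(m:ℤ)) := by
  rw [zpow_neg, zpow_natCast]
  field_simp

lemma harm_radial {m : ℕ} (c d : ℝ) (x : EuclideanSpace ℝ (Fin m)) (hx : x ≠ 0) :
    lapE (fun y : EuclideanSpace ℝ (Fin m) =>
      ((c * ‖y‖ + d * (‖y‖ / ‖y‖ ^ m)) / ‖y‖) • y) x = 0 := by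
  have hr : (0:ℝ) < ‖x‖ := norm_pos_iff.2 hx
  have heq : (fun y : EuclideanSpace ℝ (Fin m) =>
      ((c * ‖y‖ + d * (‖y‖ / ‖y‖ ^ m)) / ‖y‖) • y) =ᶠ[𝓝 x]
      fun y => (c + d * ‖y‖ ^ (-(m:ℤ))) • y := by
    filter_upwards [isOpen_ne.mem_nhds hx] with y hy
    rw [ratio_eq m c d ‖y‖ (norm_ne_zero_iff.2 hy)]
  rw [lapE_congr heq]
  have hg : ∀ r : ℝ, 0 < r → HasDerivAt (fun t : ℝ => c + d * t ^ (-(m:ℤ)))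
      ((fun t : ℝ => d * ((-(m:ℤ) : ℤ):ℝ) * t ^ (-(m:ℤ)-1)) r) r := by
    intro r hr'
    have := ((hasDerivAt_zpow (-(m:ℤ)) r (Or.inl hr'.ne')).const_mul d).const_add c
    refine this.congr_deriv ?_
    ring
  have hg' : HasDerivAt (fun t : ℝ => d * ((-(m:ℤ) : ℤ):ℝ) * t ^ (-(m:ℤ)-1))
      ((d * ((-(m:ℤ) : ℤ):ℝ)) * (((-(m:ℤ)-1 : ℤ)):ℝ) * ‖x‖ ^ (-(m:ℤ)-1-1)) ‖x‖ := by
    have := (hasDerivAt_zpow (-(m:ℤ)-1) ‖x‖ (Or.inl hr.ne')).const_mul (d * ((-(m:ℤ) : ℤ):ℝ))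
    refine this.congr_deriv ?_
    ring
  rw [lapE_radial _ _ hx hg hg']
  have e1 : ‖x‖ ^ (-(m:ℤ)-1) = ‖x‖ ^ (-(m:ℤ)-1-1) * ‖x‖ := by
    rw [← zpow_add_one₀ hr.ne']
    norm_num
  have hz : (d * ((-(m:ℤ) : ℤ):ℝ)) * (((-(m:ℤ)-1 : ℤ)):ℝ) * ‖x‖ ^ (-(m:ℤ)-1-1)
      + ((m:ℝ) + 1) * (d * ((-(m:ℤ) : ℤ):ℝ) * ‖x‖ ^ (-(m:ℤ)-1)) / ‖x‖ = 0 := by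
    rw [e1]
    push_cast
    field_simp
    ring
  rw [hz, zero_smul]


theorem stmt_4 (m : ℕ) (hm : 2 ≤ m) (ρ : ℝ → ℝ)
    (hρ : ∀ r : ℝ, 0 < r → ContDiffAt ℝ (⊤ : ℕ∞) ρ r)
    (φ : EuclideanSpace ℝ (Fin m) → EuclideanSpace ℝ (Fin m))
    (hφ : ∀ x : EuclideanSpace ℝ (Fin m), x ≠ 0 → φ x = (ρ ‖x‖ / ‖x‖) • x)
    (hbi : ∀ x : EuclideanSpace ℝ (Fin m), x ≠ 0 → lapE (lapE φ) x = 0)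
    (hm2 : 2 < m) :
    ∃ ρ₁ ρ₂ : ℝ → ℝ,
      (∀ r : ℝ, 0 < r → ContDiffAt ℝ (⊤ : ℕ∞) ρ₁ r) ∧
      (∀ r : ℝ, 0 < r → ContDiffAt ℝ (⊤ : ℕ∞) ρ₂ r) ∧
      (∀ x : EuclideanSpace ℝ (Fin m), x ≠ 0 →
        lapE (fun y : EuclideanSpace ℝ (Fin m) => (ρ₁ ‖y‖ / ‖y‖) • y) x = 0) ∧
      (∀ x : EuclideanSpace ℝ (Fin m), x ≠ 0 →
        lapE (fun y : EuclideanSpace ℝ (Fin m) => (ρ₂ ‖y‖ / ‖y‖) • y) x = 0) ∧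
      (∀ x : EuclideanSpace ℝ (Fin m), x ≠ 0 →
        φ x = ‖x‖ ^ 2 • (ρ₁ ‖x‖ / ‖x‖) • x + (ρ₂ ‖x‖ / ‖x‖) • x) := by
  classical
  have hmpos : 0 < m := by omega
  have hmR : ((m:ℝ)) ≠ 0 := Nat.cast_ne_zero.2 hmpos.ne'
  have hmgt : (2:ℝ) < (m:ℝ) := by exact_mod_cast hm2
  have hm2R : (2:ℝ) - (m:ℝ) ≠ 0 := by linarith
  set f : ℝ → ℝ := fun r => ρ r / r with hfdef
  have hfC : ContDiffOn ℝ (⊤:ℕ∞) f (Set.Ioi 0) := fun r hr =>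
    (((hρ r hr).of_le (by simp)).div contDiffAt_id (ne_of_gt hr)).contDiffWithinAt
  obtain ⟨hdf, hf1C⟩ := deriv_chain f hfC
  set f1 : ℝ → ℝ := deriv f with hf1def
  obtain ⟨hd1, hf2C⟩ := deriv_chain f1 hf1C
  set f2 : ℝ → ℝ := deriv f1 with hf2def
  obtain ⟨hd2, hf3C⟩ := deriv_chain f2 hf2C
  set f3 : ℝ → ℝ := deriv f2 with hf3def
  obtain ⟨hd3, _⟩ := deriv_chain f3 hf3C
  set u : ℝ → ℝ := fun r => f2 r + ((m:ℝ)+1) * f1 r / r with hudef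
  set u' : ℝ → ℝ := fun r =>
    f3 r + (((m:ℝ)+1) * f2 r * r - ((m:ℝ)+1) * f1 r * 1) / r ^ 2 with hu'def
  have hu : ∀ r : ℝ, 0 < r → HasDerivAt u (u' r) r := by
    intro r hr
    exact (hd2 r hr).add (((hd1 r hr).const_mul ((m:ℝ)+1)).div (hasDerivAt_id' r) hr.ne')
  -- u' has a derivative at each r > 0
  have hu'A : ∀ r : ℝ, 0 < r → ∃ A : ℝ, HasDerivAt u' A r := by
    intro r hr
    have n1 := ((hd2 r hr).const_mul ((m:ℝ)+1)).mul (hasDerivAt_id' r)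
    have n2 := ((hd1 r hr).const_mul ((m:ℝ)+1)).mul_const (1:ℝ)
    exact ⟨_, (hd3 r hr).add ((n1.sub n2).div (hasDerivAt_pow 2 r) (pow_ne_zero 2 hr.ne'))⟩
  -- lapE φ is radial with profile u
  have hstep1 : ∀ y : EuclideanSpace ℝ (Fin m), y ≠ 0 → lapE φ y = u ‖y‖ • y := by
    intro y hy
    have hyr : (0:ℝ) < ‖y‖ := norm_pos_iff.2 hy
    have heq : φ =ᶠ[𝓝 y] fun z => f ‖z‖ • z := by
      filter_upwards [isOpen_ne.mem_nhds hy] with z hz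
      rw [hφ z hz]
    rw [lapE_congr heq, lapE_radial f f1 hy hdf (hd1 ‖y‖ hyr)]
  -- biharmonicity gives the ODE for u'
  have hbir : ∀ r : ℝ, 0 < r → HasDerivAt u' (-((m:ℝ)+1) * u' r / r) r := by
    intro r hr
    obtain ⟨A, hA⟩ := hu'A r hr
    set x : EuclideanSpace ℝ (Fin m) := r • EuclideanSpace.single (⟨0, hmpos⟩ : Fin m) (1:ℝ)
      with hxdef
    have hxnorm : ‖x‖ = r := by
      rw [hxdef, norm_smul, EuclideanSpace.norm_single]
      simp [abs_of_pos hr]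
    have hxne : x ≠ 0 := by
      intro h0
      rw [h0, norm_zero] at hxnorm
      exact hr.ne hxnorm
    have heq2 : lapE φ =ᶠ[𝓝 x] fun y => u ‖y‖ • y := by
      filter_upwards [isOpen_ne.mem_nhds hxne] with y hy using hstep1 y hy
    have hA' : HasDerivAt u' A ‖x‖ := by rw [hxnorm]; exact hA
    have h0 := hbi x hxne
    rw [lapE_congr heq2, lapE_radial u u' hxne hu hA'] at h0
    rcases smul_eq_zero.1 h0 with hc | hc
    · rw [hxnorm] at hc
      have : A = -((m:ℝ)+1) * u' r / r := by
        field_simp at hc ⊢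
        linarith
      rwa [this] at hA
    · exact absurd hc hxne
  obtain ⟨a, b, hab⟩ := solve_harmonic m hmpos u u' hu hbir
  set γ : ℝ := a / (2 * ((m:ℝ)+2)) with hγdef
  set δ : ℝ := b / (2 * (2 - (m:ℝ))) with hδdef
  set F : ℝ → ℝ := fun r => f r - γ * r ^ 2 - δ * r ^ ((2:ℤ) - (m:ℤ)) with hFdef
  set F' : ℝ → ℝ := fun r =>
    f1 r - γ * (2 * r) - δ * (((2:ℤ) - (m:ℤ) : ℤ):ℝ) * r ^ ((2:ℤ) - (m:ℤ) - 1) with hF'def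
  have hFd : ∀ r : ℝ, 0 < r → HasDerivAt F (F' r) r := by
    intro r hr
    have h1 := (hasDerivAt_pow 2 r).const_mul γ
    have h2 := (hasDerivAt_zpow ((2:ℤ)-(m:ℤ)) r (Or.inl hr.ne')).const_mul δ
    have h3 := ((hdf r hr).sub h1).sub h2
    refine h3.congr_deriv ?_
    simp only [hF'def]
    push_cast
    ring
  have hF'd : ∀ r : ℝ, 0 < r → HasDerivAt F' (-((m:ℝ)+1) * F' r / r) r := by
    intro r hr
    have h1 : HasDerivAt (fun t : ℝ => γ * (2 * t)) (γ * (2 * 1)) r :=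
      ((hasDerivAt_id' r).const_mul (2:ℝ)).const_mul γ
    have h2 := (hasDerivAt_zpow ((2:ℤ)-(m:ℤ)-1) r (Or.inl hr.ne')).const_mul
      (δ * (((2:ℤ) - (m:ℤ) : ℤ):ℝ))
    have h3 := ((hd1 r hr).sub h1).sub h2
    refine h3.congr_deriv ?_
    have hur := hab r hr
    simp only [hudef] at hur
    have hf2r : f2 r = a + b * r ^ (-(m:ℤ)) - ((m:ℝ)+1) * f1 r / r := by
      rw [← hur]; ring
    have e1 : r ^ ((2:ℤ)-(m:ℤ)-1) = r ^ (-(m:ℤ)) * r := by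
      rw [← zpow_add_one₀ hr.ne']
      congr 1
      ring
    have e2 : r ^ ((2:ℤ)-(m:ℤ)-1-1) = r ^ (-(m:ℤ)) := by
      congr 1
      ring
    simp only [hF'def]
    rw [hf2r, e1, e2, hγdef, hδdef]
    push_cast
    field_simp
    ring
  obtain ⟨α, β, hαβ⟩ := solve_harmonic m hmpos F F' hFd hF'd
  refine ⟨fun r => γ * r + δ * (r / r ^ m), fun r => α * r + β * (r / r ^ m),
    fun r hr => ?_, fun r hr => ?_, fun x hx => harm_radial γ δ x hx,
    fun x hx => harm_radial α β x hx, fun x hx => ?_⟩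
  · exact (contDiffAt_const.mul contDiffAt_id).add
      (contDiffAt_const.mul (contDiffAt_id.div (contDiffAt_id.pow m) (pow_ne_zero m hr.ne')))
  · exact (contDiffAt_const.mul contDiffAt_id).add
      (contDiffAt_const.mul (contDiffAt_id.div (contDiffAt_id.pow m) (pow_ne_zero m hr.ne')))
  · have hr : (0:ℝ) < ‖x‖ := norm_pos_iff.2 hx
    have hFr := hαβ ‖x‖ hr
    simp only [hFdef] at hFr
    rw [hφ x hx, ratio_eq m γ δ ‖x‖ hr.ne', ratio_eq m α β ‖x‖ hr.ne', smul_smul, ← add_smul]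
    have hfr : ρ ‖x‖ / ‖x‖ = f ‖x‖ := rfl
    have e3 : ‖x‖ ^ ((2:ℤ)-(m:ℤ)) = ‖x‖ ^ 2 * ‖x‖ ^ (-(m:ℤ)) := by
      rw [show ((2:ℤ)-(m:ℤ)) = ((2:ℕ):ℤ) + (-(m:ℤ)) by push_cast; ring,
        zpow_add₀ hr.ne', zpow_natCast]
    rw [e3] at hFr
    have hscal : f ‖x‖ = ‖x‖ ^ 2 * (γ + δ * ‖x‖ ^ (-(m:ℤ))) + (α + β * ‖x‖ ^ (-(m:ℤ))) := by
      linear_combination hFr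
    rw [hfr, hscal]
end

section
/- The function ρ : (0,∞) → ℝ, ρ(r) = r·ln r, satisfies the fourth-order system F''(r) + F'(r)/r − F(r)/r² = 0 on (0,∞), where F(r) := ρ''(r) + ρ'(r)/r − ρ(r)/r² (in fact F(r) = 2/r), but there do NOT exist constants a₁, a₂, b₁, b₂ ∈ ℝ such that r·ln r = r²·(a₁ r + a₂ r^{−1}) + (b₁ r + b₂ r^{−1}) for all r > 0; that is, r·ln r is a solution of the biharmonic ODE with m = 2, k = 1/2 that admits no Almansi decomposition ρ = r²ρ₁ + ρ₂ with ρ₁, ρ₂ solutions of the harmonic ODE ρᵢ'' + ρᵢ'/r − ρᵢ/r² = 0. -/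
/-!
`F = 2/r` because `(r log r)' = log r + 1` and `(r log r)'' = 1/r`; then `F` lies in the kernel
`span {r, r⁻¹}` of the harmonic-map operator, so `r log r` solves the biharmonic equation.
An Almansi decomposition would give, after dividing by `r` and substituting `x = r²`,
`log x = A x + B + C / x` on `(0, ∞)`, which fails already at `x = 1, 2, 4, 16`.
-/

open Filter Topology

/-- The harmonic-map operator of the paper for `m = 2`, `k = 1/2`. -/
noncomputable def radialOp (f : ℝ → ℝ) (r : ℝ) : ℝ :=
  deriv (deriv f) r + deriv f r / r - f r / r ^ 2

theorem radialOp_congr {f g : ℝ → ℝ} {r : ℝ} (h : f =ᶠ[𝓝 r] g) :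
    radialOp f r = radialOp g r := by
  simp only [radialOp, h.deriv.deriv_eq, h.deriv_eq, h.eq_of_nhds]

theorem radialOp_linear_add_inv (a b : ℝ) {r : ℝ} (hr : r ≠ 0) :
    radialOp (fun x => a * x + b * x⁻¹) r = 0 := by
  have hd : ∀ x : ℝ, x ≠ 0 →
      HasDerivAt (fun x => a * x + b * x⁻¹) (a - b * (x ^ 2)⁻¹) x := fun x hx =>
    (((hasDerivAt_id' x).const_mul a).add ((hasDerivAt_inv hx).const_mul b)).congr_deriv
      (by ring)
  have hd_near : deriv (fun x => a * x + b * x⁻¹) =ᶠ[𝓝 r] fun x => a - b * (x ^ 2)⁻¹ :=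
    (isOpen_ne.eventually_mem hr).mono fun x hx => (hd x hx).deriv
  have hdd : HasDerivAt (fun x => a - b * (x ^ 2)⁻¹) (2 * b / r ^ 3) r :=
    (((hasDerivAt_pow 2 r).inv (pow_ne_zero 2 hr)).const_mul b).const_sub a |>.congr_deriv
      (by field_simp; ring)
  rw [radialOp, hd_near.deriv_eq, hdd.deriv, (hd r hr).deriv]
  field_simp
  ring

theorem radialOp_mul_log {r : ℝ} (hr : r ≠ 0) :
    radialOp (fun x => x * Real.log x) r = 2 / r := by
  have hd_near : deriv (fun x => x * Real.log x) =ᶠ[𝓝 r] fun x => Real.log x + 1 :=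
    (isOpen_ne.eventually_mem hr).mono fun x hx => Real.deriv_mul_log hx
  rw [radialOp, hd_near.deriv_eq, Real.deriv_mul_log hr,
    ((Real.hasDerivAt_log hr).add_const 1).deriv]
  field_simp
  ring

theorem not_exists_log_eq_affine_add_inv :
    ¬ ∃ A B C : ℝ, ∀ x : ℝ, 0 < x → Real.log x = A * x + B + C * x⁻¹ := by
  rintro ⟨A, B, C, h⟩
  have h1 := h 1 one_pos
  have h2 := h 2 two_pos
  have h4 := h 4 (by norm_num)
  have h16 := h 16 (by norm_num)
  have log4 : Real.log 4 = 2 * Real.log 2 := by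
    rw [show (4 : ℝ) = 2 ^ 2 by norm_num, Real.log_pow]; norm_num
  have log16 : Real.log 16 = 4 * Real.log 2 := by
    rw [show (16 : ℝ) = 2 ^ 4 by norm_num, Real.log_pow]; norm_num
  have hlog2 : 0 < Real.log 2 := Real.log_pos one_lt_two
  rw [Real.log_one] at h1
  rw [log4] at h4
  rw [log16] at h16
  norm_num at h1 h2 h4 h16
  linarith

theorem stmt_5 :
    let ρ : ℝ → ℝ := fun r => r * Real.log r
    let F : ℝ → ℝ := fun r => deriv (deriv ρ) r + deriv ρ r / r - ρ r / r ^ 2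
    (∀ r : ℝ, 0 < r → F r = 2 / r) ∧
    (∀ r : ℝ, 0 < r → deriv (deriv F) r + deriv F r / r - F r / r ^ 2 = 0) ∧
    ¬ (∃ a₁ a₂ b₁ b₂ : ℝ, ∀ r : ℝ, 0 < r →
        r * Real.log r = r ^ 2 * (a₁ * r + a₂ * r⁻¹) + (b₁ * r + b₂ * r⁻¹)) := by
  intro ρ F
  have hF : ∀ r : ℝ, 0 < r → F r = 2 / r := fun r hr => radialOp_mul_log hr.ne'
  refine ⟨hF, fun r hr => ?_, ?_⟩
  · have hF_near : F =ᶠ[𝓝 r] fun x => 0 * x + 2 * x⁻¹ :=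
      (eventually_gt_nhds hr).mono fun x hx => by simp [hF x hx, div_eq_mul_inv]
    exact (radialOp_congr hF_near).trans (radialOp_linear_add_inv 0 2 hr.ne')
  · rintro ⟨a₁, a₂, b₁, b₂, h⟩
    refine not_exists_log_eq_affine_add_inv ⟨2 * a₁, 2 * (a₂ + b₁), 2 * b₂, fun x hx => ?_⟩
    have hdecomp := h (√x) (Real.sqrt_pos.mpr hx)
    rw [Real.log_sqrt hx.le] at hdecomp
    field_simp at hdecomp
    rw [Real.sq_sqrt hx.le] at hdecomp
    field_simp
    linarith
end

section
/- For any constants C₁, C₂, C₃, C₄ ∈ ℝ, the map φ : ℝ⁴∖{0} → ℝ⁴ defined by φ(x) = C₁·x + C₂·|x|²·x + C₃·x/|x|² + C₄·x/|x|⁴ is biharmonic, i.e., Δ(Δφ)(x) = 0 for all x ≠ 0, where Δ denotes the componentwise Euclidean Laplacian on ℝ⁴. -/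
/-!
Each term of `φ` has the form `g (‖x‖²) • x` with `g` a Laurent polynomial in `s = ‖x‖²`, and on
`ℝⁿ` one has `Δ (g (‖x‖²) • x) = ((2n + 4) g' + 4 s g'') (‖x‖²) • x`. For `n = 4` this sends
`a + b s + c/s + d/s²` to `12 b - 4 c/s²`, and applying the same rule once more gives `0`.
-/

open scoped RealInnerProductSpace Topology
open Filter

section InnerProductSpace

variable {E : Type*} [NormedAddCommGroup E] [InnerProductSpace ℝ E]

theorem HasDerivAt.comp_norm_sq {g : ℝ → ℝ} {g' : ℝ} {x : E} (hg : HasDerivAt g g' (‖x‖ ^ 2)) :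
    HasFDerivAt (fun y : E => g (‖y‖ ^ 2)) ((2 * g') • innerSL ℝ x) x := by
  refine (hg.comp_hasFDerivAt x (hasStrictFDerivAt_norm_sq x).hasFDerivAt).congr_fderiv ?_
  ext v
  simp only [_root_.smul_apply, coe_innerSL_apply, nsmul_eq_mul, Nat.cast_ofNat, smul_eq_mul]
  ring

variable {g g' : ℝ → ℝ} {g'' : ℝ} {x : E}

theorem fderiv_comp_norm_sq_smul_self_apply (hg : HasDerivAt g (g' (‖x‖ ^ 2)) (‖x‖ ^ 2)) (v : E) :
    fderiv ℝ (fun y : E => g (‖y‖ ^ 2) • y) x v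
      = g (‖x‖ ^ 2) • v + (2 * g' (‖x‖ ^ 2) * ⟪x, v⟫) • x := by
  have hderiv : HasFDerivAt (fun y : E => g (‖y‖ ^ 2) • y) _ x :=
    hg.comp_norm_sq.smul (hasFDerivAt_id x)
  rw [hderiv.fderiv]
  simp [mul_assoc]

theorem fderiv_fderiv_comp_norm_sq_smul_self_apply
    (hg : ∀ᶠ t in 𝓝 (‖x‖ ^ 2), HasDerivAt g (g' t) t) (hg' : HasDerivAt g' g'' (‖x‖ ^ 2))
    (v : E) :
    fderiv ℝ (fun y => fderiv ℝ (fun y : E => g (‖y‖ ^ 2) • y) y v) x v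
      = (4 * g' (‖x‖ ^ 2) * ⟪x, v⟫) • v
        + (4 * g'' * ⟪x, v⟫ ^ 2 + 2 * g' (‖x‖ ^ 2) * ‖v‖ ^ 2) • x := by
  have hnear : (fun y => fderiv ℝ (fun y : E => g (‖y‖ ^ 2) • y) y v)
      =ᶠ[𝓝 x] fun y => g (‖y‖ ^ 2) • v + (2 * g' (‖y‖ ^ 2) * ⟪y, v⟫) • y := by
    have hcont : Tendsto (fun y : E => ‖y‖ ^ 2) (𝓝 x) (𝓝 (‖x‖ ^ 2)) :=
      (continuous_norm.pow 2).continuousAt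
    filter_upwards [hcont.eventually hg] with y hy
    exact fderiv_comp_norm_sq_smul_self_apply hy v
  have hinner : HasFDerivAt (fun y : E => ⟪y, v⟫) (innerSL ℝ v) x := by
    simpa [real_inner_comm] using (innerSL ℝ v).hasFDerivAt (x := x)
  have hderiv : HasFDerivAt
      (fun y => g (‖y‖ ^ 2) • v + (2 * g' (‖y‖ ^ 2) * ⟪y, v⟫) • y) _ x :=
    (hg.self_of_nhds.comp_norm_sq.smul_const v).add
      (((hg'.comp_norm_sq.const_mul 2).mul hinner).smul (hasFDerivAt_id x))
  rw [hnear.fderiv_eq, hderiv.fderiv]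
  simp only [real_inner_comm, Pi.mul_apply, _root_.add_apply,
    ContinuousLinearMap.smulRight_apply, _root_.smul_apply, coe_innerSL_apply,
    smul_eq_mul, ContinuousLinearMap.id_apply, real_inner_self_eq_norm_sq]
  module

end InnerProductSpace

theorem lapE_congr_of_eventuallyEq {m : ℕ} {F : Type*} [NormedAddCommGroup F] [NormedSpace ℝ F]
    {f h : EuclideanSpace ℝ (Fin m) → F} {x : EuclideanSpace ℝ (Fin m)}
    (hfh : f =ᶠ[𝓝 x] h) : lapE f x = lapE h x := by
  have hderiv : fderiv ℝ f =ᶠ[𝓝 x] fderiv ℝ h :=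
    hfh.eventuallyEq_nhds.mono fun _ => EventuallyEq.fderiv_eq
  refine Finset.sum_congr rfl fun i _ => ?_
  have hdir : (fun y => fderiv ℝ f y (EuclideanSpace.single i (1 : ℝ)))
      =ᶠ[𝓝 x] fun y => fderiv ℝ h y (EuclideanSpace.single i (1 : ℝ)) :=
    hderiv.mono fun _ hy => DFunLike.congr_fun hy _
  rw [hdir.fderiv_eq]

theorem lapE_comp_norm_sq_smul_self {m : ℕ} {g g' : ℝ → ℝ} {g'' : ℝ}
    {x : EuclideanSpace ℝ (Fin m)}
    (hg : ∀ᶠ t in 𝓝 (‖x‖ ^ 2), HasDerivAt g (g' t) t) (hg' : HasDerivAt g' g'' (‖x‖ ^ 2)) :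
    lapE (fun y => g (‖y‖ ^ 2) • y) x
      = ((2 * m + 4) * g' (‖x‖ ^ 2) + 4 * ‖x‖ ^ 2 * g'') • x := by
  have hbasis : ∑ i : Fin m, x i • EuclideanSpace.single i (1 : ℝ) = x := by
    simpa using (EuclideanSpace.basisFun (Fin m) ℝ).sum_repr x
  simp only [lapE, fderiv_fderiv_comp_norm_sq_smul_self_apply hg hg',
    EuclideanSpace.inner_single_right, PiLp.norm_single, norm_one]
  have hcoeff : ∑ i : Fin m, (4 * g'' * x i ^ 2 + 2 * g' (‖x‖ ^ 2) * 1 ^ 2)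
      = 4 * ‖x‖ ^ 2 * g'' + 2 * m * g' (‖x‖ ^ 2) := by
    rw [Finset.sum_add_distrib, ← Finset.mul_sum, ← EuclideanSpace.real_norm_sq_eq]
    simp only [one_pow, mul_one, Finset.sum_const, Finset.card_univ, Fintype.card_fin,
      nsmul_eq_mul]
    ring
  simp only [one_mul, conj_trivial, Finset.sum_add_distrib, mul_smul, ← Finset.smul_sum, hbasis,
    ← Finset.sum_smul, hcoeff]
  module

noncomputable def laurentProfile (a b c d s : ℝ) : ℝ := a + b * s + c / s + d / s ^ 2

section LaurentProfile

variable (a b c d : ℝ) {s : ℝ}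

theorem hasDerivAt_laurentProfile (hs : s ≠ 0) :
    HasDerivAt (laurentProfile a b c d) (b - c / s ^ 2 - 2 * d / s ^ 3) s := by
  have h := (((hasDerivAt_const s a).add ((hasDerivAt_id s).const_mul b)).add
    ((hasDerivAt_const s c).div (hasDerivAt_id s) hs)).add
    ((hasDerivAt_const s d).div (hasDerivAt_pow 2 s) (pow_ne_zero 2 hs))
  refine h.congr_deriv ?_
  simp only [id]
  field_simp
  ring

theorem hasDerivAt_laurentProfile_deriv (hs : s ≠ 0) :
    HasDerivAt (fun t => b - c / t ^ 2 - 2 * d / t ^ 3) (2 * c / s ^ 3 + 6 * d / s ^ 4) s := by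
  have h := ((hasDerivAt_const s b).sub
    ((hasDerivAt_const s c).div (hasDerivAt_pow 2 s) (pow_ne_zero 2 hs))).sub
    ((hasDerivAt_const s (2 * d)).div (hasDerivAt_pow 3 s) (pow_ne_zero 3 hs))
  refine h.congr_deriv ?_
  field_simp
  ring

theorem lapE_laurentProfile_smul_self {x : EuclideanSpace ℝ (Fin 4)} (hx : x ≠ 0) :
    lapE (fun y => laurentProfile a b c d (‖y‖ ^ 2) • y) x
      = laurentProfile (12 * b) 0 0 (-4 * c) (‖x‖ ^ 2) • x := by
  have hs : ‖x‖ ^ 2 ≠ 0 := by positivity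
  rw [lapE_comp_norm_sq_smul_self
    ((eventually_ne_nhds hs).mono fun t ht => hasDerivAt_laurentProfile a b c d ht)
    (hasDerivAt_laurentProfile_deriv b c d hs)]
  congr 1
  simp only [laurentProfile]
  field_simp
  ring

end LaurentProfile

theorem stmt_9 (C₁ C₂ C₃ C₄ : ℝ) :
    ∀ x : EuclideanSpace ℝ (Fin 4), x ≠ 0 →
      lapE (lapE (fun y : EuclideanSpace ℝ (Fin 4) =>
        C₁ • y + (C₂ * ‖y‖ ^ 2) • y + (C₃ / ‖y‖ ^ 2) • y + (C₄ / ‖y‖ ^ 4) • y)) x = 0 := by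
  intro x hx
  have hφ : (fun y : EuclideanSpace ℝ (Fin 4) =>
        C₁ • y + (C₂ * ‖y‖ ^ 2) • y + (C₃ / ‖y‖ ^ 2) • y + (C₄ / ‖y‖ ^ 4) • y)
      = fun y => laurentProfile C₁ C₂ C₃ C₄ (‖y‖ ^ 2) • y := by
    funext y
    rw [laurentProfile, ← pow_mul, add_smul, add_smul, add_smul]
  have hΔφ : lapE (fun y => laurentProfile C₁ C₂ C₃ C₄ (‖y‖ ^ 2) • y)
      =ᶠ[𝓝 x] fun y => laurentProfile (12 * C₂) 0 0 (-4 * C₃) (‖y‖ ^ 2) • y :=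
    (eventually_ne_nhds hx).mono fun y hy => lapE_laurentProfile_smul_self C₁ C₂ C₃ C₄ hy
  rw [hφ, lapE_congr_of_eventuallyEq hΔφ, lapE_laurentProfile_smul_self _ _ _ _ hx]
  simp [laurentProfile]
end

section
/- Let c ∈ ℝ, A > 0, and let λ : [0,∞) → ℝ be differentiable with λ(0) = 0 and λ(ρ) > 0 for all ρ > 0, such that u := λ² is twice differentiable on [0,∞) and satisfies u''(ρ) = 2A·u(ρ) + 2(1+c) for all ρ ≥ 0. Then 1 + c > 0 and there exists a constant C > 0 such that λ(ρ) = C·sinh(√(2A)·ρ/2) for all ρ ≥ 0; in fact C = √(2(1+c)/A). -/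
/-- A function with zero right-derivative on `[0,∞)` is constant there. -/
lemma stmt12_const_of_deriv_zero {f : ℝ → ℝ}
    (h : ∀ x ∈ Set.Ici (0 : ℝ), HasDerivWithinAt f 0 (Set.Ici 0) x) :
    ∀ x ∈ Set.Ici (0 : ℝ), f x = f 0 := by
  intro b hb
  have hcont : ContinuousOn f (Set.Icc 0 b) := fun x hx =>
    ((h x hx.1).continuousWithinAt).mono Set.Icc_subset_Ici_self
  have hderiv : ∀ x ∈ Set.Ico (0 : ℝ) b, HasDerivWithinAt f 0 (Set.Ici x) x := fun x hx =>
    (h x hx.1).mono (Set.Ici_subset_Ici.2 hx.1)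
  exact constant_of_has_deriv_right_zero hcont hderiv b (Set.right_mem_Icc.2 hb)

/- STATEMENT 12: case A > 0 of the warping function ODE. If λ : [0,∞) → ℝ is
differentiable, λ(0) = 0, λ > 0 on (0,∞), and u = λ² is twice differentiable with
u'' = 2Au + 2(1+c) on [0,∞), then 1 + c > 0 and λ(ρ) = C·sinh(√(2A)ρ/2) with
C = √(2(1+c)/A) > 0. -/
theorem stmt_12 (c A : ℝ) (hA : 0 < A) (lam u' : ℝ → ℝ)
    (hlam0 : lam 0 = 0)
    (hlampos : ∀ ρ : ℝ, 0 < ρ → 0 < lam ρ)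
    (hdiff : ∀ ρ ∈ Set.Ici (0 : ℝ), DifferentiableWithinAt ℝ lam (Set.Ici 0) ρ)
    (hu : ∀ ρ ∈ Set.Ici (0 : ℝ),
      HasDerivWithinAt (fun t => (lam t) ^ 2) (u' ρ) (Set.Ici 0) ρ)
    (hu'' : ∀ ρ ∈ Set.Ici (0 : ℝ),
      HasDerivWithinAt u' (2 * A * (lam ρ) ^ 2 + 2 * (1 + c)) (Set.Ici 0) ρ) :
    0 < 1 + c ∧ ∃ C : ℝ, 0 < C ∧ C = Real.sqrt (2 * (1 + c) / A) ∧
      ∀ ρ ∈ Set.Ici (0 : ℝ), lam ρ = C * Real.sinh (Real.sqrt (2 * A) * ρ / 2) := by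
  set s : ℝ := Real.sqrt (2 * A) with hs
  have hs_pos : 0 < s := Real.sqrt_pos.2 (by linarith)
  have hs_sq : s * s = 2 * A := Real.mul_self_sqrt (by linarith)
  have hA' : A ≠ 0 := ne_of_gt hA
  have hmul : ∀ t : ℝ, HasDerivAt (fun y : ℝ => s * y) s t := fun t => by
    simpa using (hasDerivAt_id t).const_mul s
  -- u'(0) = 0
  have hmem0 : (0 : ℝ) ∈ Set.Ici (0 : ℝ) := Set.self_mem_Ici
  have hudiff : UniqueDiffWithinAt ℝ (Set.Ici (0 : ℝ)) 0 := uniqueDiffOn_Ici 0 0 hmem0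
  have hu'0 : u' 0 = 0 := by
    have h1 : HasDerivWithinAt (fun t => (lam t) ^ 2)
        (2 * lam 0 ^ 1 * derivWithin lam (Set.Ici 0) 0) (Set.Ici 0) 0 :=
      ((hdiff 0 hmem0).hasDerivWithinAt).pow 2
    have e1 := (hu 0 hmem0).derivWithin hudiff
    have e2 := h1.derivWithin hudiff
    rw [hlam0] at e2
    rw [← e1, e2]; ring
  -- the explicit solution and its derivative
  obtain ⟨K, hK⟩ : ∃ K : ℝ, K * A = 1 + c := ⟨(1 + c) / A, div_mul_cancel₀ _ hA'⟩
  set u₀ : ℝ → ℝ := fun t => K * (Real.cosh (s * t) - 1) with hu₀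
  set u₀' : ℝ → ℝ := fun t => K * (Real.sinh (s * t) * s) with hu₀'
  have hd0 : ∀ t : ℝ, HasDerivAt u₀ (u₀' t) t := fun t =>
    (((hmul t).cosh).sub_const 1).const_mul K
  have hd0' : ∀ t : ℝ, HasDerivAt u₀' (K * (Real.cosh (s * t) * s * s)) t := fun t => by
    exact (((hmul t).sinh).mul_const s).const_mul K
  -- difference
  set w : ℝ → ℝ := fun t => (lam t) ^ 2 - u₀ t with hw
  set w' : ℝ → ℝ := fun t => u' t - u₀' t with hw'
  have hw0 : w 0 = 0 := by simp [hw, hu₀, hlam0]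
  have hw'0 : w' 0 = 0 := by simp [hw', hu₀', hu'0]
  have hdw : ∀ ρ ∈ Set.Ici (0 : ℝ), HasDerivWithinAt w (w' ρ) (Set.Ici 0) ρ := fun ρ hρ =>
    (hu ρ hρ).sub ((hd0 ρ).hasDerivWithinAt)
  have hdw' : ∀ ρ ∈ Set.Ici (0 : ℝ), HasDerivWithinAt w' (2 * A * w ρ) (Set.Ici 0) ρ := by
    intro ρ hρ
    have h1 := (hu'' ρ hρ).sub ((hd0' ρ).hasDerivWithinAt)
    have heq : 2 * A * (lam ρ) ^ 2 + 2 * (1 + c) - K * (Real.cosh (s * ρ) * s * s)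
        = 2 * A * w ρ := by
      simp only [hw, hu₀]
      linear_combination (-2) * hK - K * Real.cosh (s * ρ) * hs_sq
    rwa [heq] at h1
  -- step 1: p = w' - s w satisfies p' = -s p, p(0) = 0, hence p ≡ 0
  set p : ℝ → ℝ := fun t => w' t - s * w t with hp
  have hdp : ∀ ρ ∈ Set.Ici (0 : ℝ), HasDerivWithinAt p (-s * p ρ) (Set.Ici 0) ρ := by
    intro ρ hρ
    have h1 := (hdw' ρ hρ).sub ((hdw ρ hρ).const_mul s)
    have heq : 2 * A * w ρ - s * w' ρ = -s * p ρ := by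
      simp only [hp]
      linear_combination (-(w ρ)) * hs_sq
    rwa [heq] at h1
  have hpzero : ∀ ρ ∈ Set.Ici (0 : ℝ), p ρ = 0 := by
    have hq : ∀ ρ ∈ Set.Ici (0 : ℝ),
        HasDerivWithinAt (fun t => Real.exp (s * t) * p t) 0 (Set.Ici 0) ρ := by
      intro ρ hρ
      have he : HasDerivAt (fun t : ℝ => Real.exp (s * t)) (Real.exp (s * ρ) * s) ρ :=
        (hmul ρ).exp
      have h1 := (he.hasDerivWithinAt).mul (hdp ρ hρ)
      have heq : Real.exp (s * ρ) * s * p ρ + Real.exp (s * ρ) * (-s * p ρ) = 0 := by ring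
      rwa [heq] at h1
    intro ρ hρ
    have := stmt12_const_of_deriv_zero hq ρ hρ
    have h0 : p 0 = 0 := by simp [hp, hw0, hw'0]
    rw [h0, mul_zero] at this
    have hne : Real.exp (s * ρ) ≠ 0 := (Real.exp_pos _).ne'
    exact (mul_eq_zero.1 this).resolve_left hne
  -- step 2: w' = s w, hence w ≡ 0
  have hwzero : ∀ ρ ∈ Set.Ici (0 : ℝ), w ρ = 0 := by
    have hr : ∀ ρ ∈ Set.Ici (0 : ℝ),
        HasDerivWithinAt (fun t => Real.exp (-s * t) * w t) 0 (Set.Ici 0) ρ := by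
      intro ρ hρ
      have hmul' : HasDerivAt (fun y : ℝ => -s * y) (-s) ρ := by
        simpa using (hasDerivAt_id ρ).const_mul (-s)
      have he : HasDerivAt (fun t : ℝ => Real.exp (-s * t)) (Real.exp (-s * ρ) * (-s)) ρ :=
        hmul'.exp
      have h1 := (he.hasDerivWithinAt).mul (hdw ρ hρ)
      have hw's : w' ρ = s * w ρ := by
        have := hpzero ρ hρ; simp only [hp] at this; linarith
      rw [hw's] at h1
      have heq : Real.exp (-s * ρ) * (-s) * w ρ + Real.exp (-s * ρ) * (s * w ρ) = 0 := by ring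
      rwa [heq] at h1
    intro ρ hρ
    have := stmt12_const_of_deriv_zero hr ρ hρ
    have h0 : Real.exp (-s * 0) * w 0 = 0 := by simp [hw0]
    rw [h0] at this
    have hne : Real.exp (-s * ρ) ≠ 0 := (Real.exp_pos _).ne'
    exact (mul_eq_zero.1 this).resolve_left hne
  -- so A * lam ρ ^ 2 = (1+c) * (cosh (s ρ) - 1) on [0,∞)
  have hsq : ∀ ρ ∈ Set.Ici (0 : ℝ), A * (lam ρ) ^ 2 = (1 + c) * (Real.cosh (s * ρ) - 1) := by
    intro ρ hρ
    have h0 := hwzero ρ hρ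
    simp only [hw, hu₀] at h0
    linear_combination A * h0 + (Real.cosh (s * ρ) - 1) * hK
  -- 1 + c > 0
  have hc : 0 < 1 + c := by
    have h1 := hsq 1 (by norm_num)
    have hl : 0 < lam 1 := hlampos 1 one_pos
    have hcosh : 1 < Real.cosh (s * 1) := Real.one_lt_cosh.2 (by positivity)
    nlinarith [mul_pos hA (pow_pos hl 2)]
  refine ⟨hc, Real.sqrt (2 * (1 + c) / A), ?_, rfl, ?_⟩
  · exact Real.sqrt_pos.2 (by positivity)
  · intro ρ hρ
    have hρ0 : (0 : ℝ) ≤ ρ := hρ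
    have hlnn : 0 ≤ lam ρ := by
      rcases eq_or_lt_of_le hρ0 with h | h
      · rw [← h, hlam0]
      · exact le_of_lt (hlampos ρ h)
    have hsinh : 0 ≤ Real.sinh (s * ρ / 2) := by positivity
    have hCsq : Real.sqrt (2 * (1 + c) / A) ^ 2 = 2 * (1 + c) / A :=
      Real.sq_sqrt (by positivity)
    have hid : Real.cosh (s * ρ) - 1 = 2 * Real.sinh (s * ρ / 2) ^ 2 := by
      have h2 : s * ρ = 2 * (s * ρ / 2) := by ring
      rw [h2, Real.cosh_two_mul, Real.cosh_sq]
      ring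
    have hsqeq : (lam ρ) ^ 2 = (Real.sqrt (2 * (1 + c) / A) * Real.sinh (s * ρ / 2)) ^ 2 := by
      have h1 := hsq ρ hρ
      rw [hid] at h1
      rw [mul_pow, hCsq]
      field_simp
      linear_combination h1
    have := congrArg Real.sqrt hsqeq
    rwa [Real.sqrt_sq hlnn, Real.sqrt_sq (by positivity)] at this
end

section
/- Let c ∈ ℝ, A < 0, b > 0, and let λ : [0,b] → ℝ be differentiable with λ(0) = 0 and λ(ρ) > 0 for all ρ ∈ (0,b), such that u := λ² is twice differentiable on [0,b] and satisfies u''(ρ) = 2A·u(ρ) + 2(1+c) for all ρ ∈ [0,b]. Then 1 + c > 0 and there exists a constant C > 0 such that λ(ρ) = C·sin(√(2|A|)·ρ/2) for all ρ ∈ [0,b]; in fact C = √(2(1+c)/|A|). -/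
/-! Subtracting the particular solution `K/ω² (1 - cos ωρ)`, with `ω² = 2|A|` and
`K = 2(1+c)`, from `u = λ²` leaves a solution of `v'' = -ω² v` with `v(0) = v'(0) = 0`
(the condition `u'(0) = 0` comes from `λ(0) = 0` and the chain rule), and the conserved
energy `v'² + ω² v²` forces `v ≡ 0`. Hence `λ² = C² sin²(ωρ/2)`. Positivity of `λ` on
`(0, b)` gives `1 + c > 0` and `ωb ≤ 2π`, so `sin(ωρ/2) ≥ 0` on `[0, b]`, and taking
nonnegative square roots identifies `λ`. -/

open Real Set

theorem eq_zero_of_hasDerivWithinAt_sq {f : ℝ → ℝ} {s : Set ℝ} {x d : ℝ}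
    (hs : UniqueDiffWithinAt ℝ s x) (hf : DifferentiableWithinAt ℝ f s x) (hfx : f x = 0)
    (h : HasDerivWithinAt (fun t => f t ^ 2) d s x) : d = 0 := by
  simpa [hfx] using hs.eq_deriv s h (hf.hasDerivWithinAt.pow 2)

theorem eqOn_zero_of_harmonic {v w : ℝ → ℝ} {k a b : ℝ} (hk : 0 < k)
    (hv : ∀ x ∈ Icc a b, HasDerivWithinAt v (w x) (Icc a b) x)
    (hw : ∀ x ∈ Icc a b, HasDerivWithinAt w (-k * v x) (Icc a b) x)
    (hva : v a = 0) (hwa : w a = 0) : ∀ x ∈ Icc a b, v x = 0 := by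
  set E : ℝ → ℝ := fun x => w x ^ 2 + k * v x ^ 2
  have hE : ∀ x ∈ Icc a b, HasDerivWithinAt E 0 (Icc a b) x := fun x hx =>
    (((hw x hx).pow 2).add (((hv x hx).pow 2).const_mul k)).congr_deriv (by push_cast; ring)
  have hconst : ∀ x ∈ Icc a b, E x = E a :=
    constant_of_has_deriv_right_zero (fun x hx => (hE x hx).continuousWithinAt)
      fun x hx => (hE x (Ico_subset_Icc_self hx)).mono_of_mem_nhdsWithin
        (Icc_mem_nhdsGE_of_mem hx)
  intro x hx
  have hEx : w x ^ 2 + k * v x ^ 2 = 0 := by simpa [E, hva, hwa] using hconst x hx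
  exact pow_eq_zero_iff two_ne_zero |>.1 (by nlinarith [sq_nonneg (w x), sq_nonneg (v x)])

theorem eqOn_of_forced_harmonic {u u' : ℝ → ℝ} {ω K b : ℝ} (hω : ω ≠ 0)
    (hu : ∀ x ∈ Icc 0 b, HasDerivWithinAt u (u' x) (Icc 0 b) x)
    (hu' : ∀ x ∈ Icc 0 b, HasDerivWithinAt u' (-ω ^ 2 * u x + K) (Icc 0 b) x)
    (h0 : u 0 = 0) (h0' : u' 0 = 0) :
    ∀ x ∈ Icc 0 b, u x = K / ω ^ 2 * (1 - cos (ω * x)) := by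
  have hlin (x : ℝ) : HasDerivAt (fun t => ω * t) ω x := by
    simpa using (hasDerivAt_id x).const_mul ω
  have hp (x : ℝ) :
      HasDerivAt (fun t => K / ω ^ 2 * (1 - cos (ω * t))) (K / ω * sin (ω * x)) x :=
    (((hlin x).cos.const_sub 1).const_mul _).congr_deriv (by field_simp)
  have hp' (x : ℝ) : HasDerivAt (fun t => K / ω * sin (ω * t)) (K * cos (ω * x)) x :=
    ((hlin x).sin.const_mul _).congr_deriv (by field_simp)
  have hv := eqOn_zero_of_harmonic (v := fun x => u x - K / ω ^ 2 * (1 - cos (ω * x)))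
    (w := fun x => u' x - K / ω * sin (ω * x)) (k := ω ^ 2) (by positivity)
    (fun x hx => (hu x hx).sub (hp x).hasDerivWithinAt)
    (fun x hx => ((hu' x hx).sub (hp' x).hasDerivWithinAt).congr_deriv (by field_simp; ring))
    (by simp [h0]) (by simp [h0'])
  exact fun x hx => sub_eq_zero.1 (hv x hx)

theorem eqOn_mul_sin_of_sq_eq {g : ℝ → ℝ} {C ω b : ℝ} (hb : 0 < b) (hC : 0 ≤ C) (hω : 0 < ω)
    (hg : ContinuousOn g (Icc 0 b)) (hpos : ∀ x ∈ Ioo 0 b, 0 < g x)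
    (hsq : ∀ x ∈ Icc 0 b, g x ^ 2 = (C * sin (ω * x / 2)) ^ 2) :
    ∀ x ∈ Icc 0 b, g x = C * sin (ω * x / 2) := by
  have hωb : ω * b ≤ 2 * π := by
    by_contra! h
    have hx : 2 * π / ω ∈ Ioo 0 b := ⟨by positivity, by rw [div_lt_iff₀ hω]; linarith⟩
    have hzero := hsq _ (Ioo_subset_Icc_self hx)
    rw [show ω * (2 * π / ω) / 2 = π by field_simp, sin_pi, mul_zero] at hzero
    exact (hpos _ hx).ne' (by simpa using hzero)
  have hg_nonneg : ∀ x ∈ Icc 0 b, 0 ≤ g x := by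
    rw [← closure_Ioo hb.ne] at hg ⊢
    exact le_on_closure (fun x hx => (hpos x hx).le) continuousOn_const hg
  intro x hx
  have hsin : 0 ≤ sin (ω * x / 2) :=
    sin_nonneg_of_nonneg_of_le_pi (by have := hx.1; positivity) (by nlinarith [hx.2])
  exact (pow_left_inj₀ (hg_nonneg x hx) (mul_nonneg hC hsin) two_ne_zero).1 (hsq x hx)

theorem stmt_13 (c A b : ℝ) (hA : A < 0) (hb : 0 < b) (lam u' : ℝ → ℝ)
    (hlam0 : lam 0 = 0)
    (hlampos : ∀ ρ : ℝ, 0 < ρ → ρ < b → 0 < lam ρ)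
    (hdiff : ∀ ρ ∈ Set.Icc (0 : ℝ) b, DifferentiableWithinAt ℝ lam (Set.Icc 0 b) ρ)
    (hu : ∀ ρ ∈ Set.Icc (0 : ℝ) b,
      HasDerivWithinAt (fun t => (lam t) ^ 2) (u' ρ) (Set.Icc 0 b) ρ)
    (hu'' : ∀ ρ ∈ Set.Icc (0 : ℝ) b,
      HasDerivWithinAt u' (2 * A * (lam ρ) ^ 2 + 2 * (1 + c)) (Set.Icc 0 b) ρ) :
    0 < 1 + c ∧ ∃ C : ℝ, 0 < C ∧ C = Real.sqrt (2 * (1 + c) / |A|) ∧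
      ∀ ρ ∈ Set.Icc (0 : ℝ) b, lam ρ = C * Real.sin (Real.sqrt (2 * |A|) * ρ / 2) := by
  have hAabs : |A| = -A := abs_of_neg hA
  have hApos : 0 < |A| := abs_pos.2 hA.ne
  set ω := √(2 * |A|)
  have hω : 0 < ω := sqrt_pos.2 (by positivity)
  have hω2 : ω ^ 2 = 2 * |A| := sq_sqrt (by positivity)
  have h0 : (0 : ℝ) ∈ Icc 0 b := ⟨le_rfl, hb.le⟩
  have hu'0 : u' 0 = 0 :=
    eq_zero_of_hasDerivWithinAt_sq (uniqueDiffOn_Icc hb 0 h0) (hdiff 0 h0) hlam0 (hu 0 h0)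
  have hsol := eqOn_of_forced_harmonic (u := fun t => lam t ^ 2) (K := 2 * (1 + c)) hω.ne' hu
    (fun x hx => (hu'' x hx).congr_deriv (by rw [hω2, hAabs]; ring)) (by simp [hlam0]) hu'0
  have hc : 0 < 1 + c := by
    have hmid : b / 2 ∈ Ioo 0 b := ⟨by positivity, by linarith⟩
    have hlam2 := hsol _ (Ioo_subset_Icc_self hmid) ▸ pow_pos (hlampos _ hmid.1 hmid.2) 2
    have := pos_of_mul_pos_left hlam2 (by linarith [cos_le_one (ω * (b / 2))])
    linarith [(div_pos_iff_of_pos_right (by positivity : (0 : ℝ) < ω ^ 2)).1 this]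
  refine ⟨hc, _, sqrt_pos.2 (by positivity), rfl, ?_⟩
  refine eqOn_mul_sin_of_sq_eq hb (sqrt_nonneg _) hω (fun x hx => (hdiff x hx).continuousWithinAt)
    (fun x hx => hlampos x hx.1 hx.2) fun x hx => ?_
  rw [hsol x hx, hω2, mul_pow, sq_sqrt (by positivity), sin_sq_eq_half_sub,
    show 2 * (ω * x / 2) = ω * x by ring]
  ring
end
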